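/- arXiv:math/0608391 — 5 statements merged into one kernel-verified Lean document; each statement's English description precedes it below -/
import Mathlib

section
/- Every permutation of length at least 2 can be written as the inflation σ[α₁,…,α_m] of a simple permutation σ of length m ≥ 2 by nonempty permutations α₁,…,α_m, and the simple permutation σ is unique: if σ[α₁,…,α_m] = σ'[α₁',…,α_{m'}'] with σ, σ' simple of lengths m, m' ≥ 2, then σ = σ'. -/
/-- A permutation of length `n`. -/
abbrev Perm (n : ℕ) := Equiv.Perm (Fin n)

/-- `σ` is contained in `π`: there is a strictly increasing sequence of indices of `π`
on which `π` is order isomorphic to `σ`. -/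
def Contains {m n : ℕ} (σ : Perm m) (π : Perm n) : Prop :=
  ∃ f : Fin m → Fin n, StrictMono f ∧ ∀ s t : Fin m, π (f s) < π (f t) ↔ σ s < σ t

/-- A permutation class: a downset in the containment order. -/
def IsPermClass (C : ∀ n, Set (Perm n)) : Prop :=
  ∀ ⦃m n : ℕ⦄ (σ : Perm m) (π : Perm n), π ∈ C n → Contains σ π → σ ∈ C m

/-- A set of contiguous values. -/
def IsRange {n : ℕ} (I : Finset (Fin n)) : Prop :=
  ∀ ⦃i j l : Fin n⦄, i ∈ I → l ∈ I → i ≤ j → j ≤ l → j ∈ I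

/-- An interval of `π`: a set of contiguous indices mapped to a set of contiguous values. -/
def IsPermInterval {n : ℕ} (π : Perm n) (I : Finset (Fin n)) : Prop :=
  IsRange I ∧ IsRange (I.image π)

/-- A permutation is simple if its only intervals have size `0`, `1`, or `n`. -/
def IsSimple {n : ℕ} (π : Perm n) : Prop :=
  ∀ I : Finset (Fin n), IsPermInterval π I → I.card ≤ 1 ∨ I.card = n

/-- `π` is the inflation `σ[α 0, …, α (m-1)]` of `σ` by the nonempty permutations
`α i` (of lengths `k i ≥ 1`): `π` has length `∑ i, k i` and its value at position
`(∑_{t < i} k t) + j` equals `(∑_{t : σ t < σ i} k t) + α i j`. -/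
def IsInflation {N m : ℕ} {k : Fin m → ℕ} (σ : Perm m) (α : ∀ i, Perm (k i))
    (π : Perm N) : Prop :=
  (∀ i, 0 < k i) ∧ N = ∑ i, k i ∧
    ∀ (i : Fin m) (j : Fin (k i)) (p : Fin N),
      (p : ℕ) = (∑ t ∈ Finset.univ.filter fun t => t < i, k t) + (j : ℕ) →
      (π p : ℕ) = (∑ t ∈ Finset.univ.filter fun t => σ t < σ i, k t) + (α i j : ℕ)

namespace S8
open Finset

def ico (n a b : ℕ) : Finset (Fin n) := univ.filter (fun p => a ≤ (p:ℕ) ∧ (p:ℕ) < b)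

lemma mem_ico {n a b : ℕ} {p : Fin n} : p ∈ ico n a b ↔ a ≤ (p:ℕ) ∧ (p:ℕ) < b := by
  simp [ico]

lemma isRange_ico {n a b : ℕ} : IsRange (ico n a b) := by
  intro i j l hi hl hij hjl
  rw [mem_ico] at *
  rw [Fin.le_def] at hij hjl
  omega

lemma card_ico {n : ℕ} (a b : ℕ) (h : b ≤ n) : (ico n a b).card = b - a := by
  rw [← Nat.card_Ico a b]
  apply Finset.card_bij (fun (p : Fin n) _ => (p : ℕ))
  · intro p hp; rw [mem_ico] at hp; simpa [Finset.mem_Ico] using hp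
  · intro p hp q hq hpq; exact Fin.ext hpq
  · intro x hx
    rw [Finset.mem_Ico] at hx
    exact ⟨⟨x, lt_of_lt_of_le hx.2 h⟩, by rw [mem_ico]; exact ⟨hx.1, hx.2⟩, rfl⟩

lemma range_rep {n : ℕ} {X : Finset (Fin n)} (hX : IsRange X) (hne : X.Nonempty) :
    X = ico n (X.min' hne) (X.min' hne + X.card) := by
  have hmax : ∀ p ∈ X, (p : ℕ) ≤ (X.max' hne : ℕ) := fun p hp => X.le_max' p hp
  have hmin : ∀ p ∈ X, (X.min' hne : ℕ) ≤ (p : ℕ) := fun p hp => X.min'_le p hp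
  have h1 : X = ico n (X.min' hne) ((X.max' hne : ℕ) + 1) := by
    apply Finset.Subset.antisymm
    · intro p hp; rw [mem_ico]; exact ⟨hmin p hp, Nat.lt_succ_of_le (hmax p hp)⟩
    · intro p hp
      rw [mem_ico] at hp
      exact hX (X.min'_mem hne) (X.max'_mem hne) (by rw [Fin.le_def]; exact hp.1)
        (by rw [Fin.le_def]; omega)
  have hc : X.card = (X.max' hne : ℕ) + 1 - (X.min' hne : ℕ) := by
    have := card_ico (n := n) (X.min' hne : ℕ) ((X.max' hne : ℕ) + 1) (X.max' hne).isLt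
    rw [← h1] at this; exact this
  have hle : (X.min' hne : ℕ) ≤ (X.max' hne : ℕ) := hmin _ (X.max'_mem hne)
  have h2 : (X.max' hne : ℕ) + 1 = (X.min' hne : ℕ) + X.card := by omega
  conv_lhs => rw [h1]
  rw [h2]

lemma ico_zero_univ {n : ℕ} : ico n 0 n = univ := by
  apply Finset.eq_univ_of_forall; intro p; rw [mem_ico]; exact ⟨Nat.zero_le _, p.isLt⟩

lemma isRange_union {n : ℕ} {A B : Finset (Fin n)} (hA : IsRange A) (hB : IsRange B)
    (hAB : (A ∩ B).Nonempty) : IsRange (A ∪ B) := by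
  obtain ⟨z, hz⟩ := hAB
  rw [Finset.mem_inter] at hz
  intro i j l hi hl hij hjl
  rw [Finset.mem_union] at *
  rcases hi with hi | hi <;> rcases hl with hl | hl
  · exact Or.inl (hA hi hl hij hjl)
  · rcases le_total j z with h | h
    · exact Or.inl (hA hi hz.1 hij h)
    · exact Or.inr (hB hz.2 hl h hjl)
  · rcases le_total j z with h | h
    · exact Or.inr (hB hi hz.2 hij h)
    · exact Or.inl (hA hz.1 hl h hjl)
  · exact Or.inr (hB hi hl hij hjl)

section Blocks
variable {N m : ℕ} (k : Fin m → ℕ)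

/-- prefix sums of `k`, with `ℕ` cut-off index. -/
def S (i : ℕ) : ℕ := ∑ t ∈ univ.filter (fun t : Fin m => (t:ℕ) < i), k t

lemma S_zero : S k 0 = 0 := by simp [S]

lemma S_top : S k m = ∑ t, k t := by
  unfold S
  congr 1
  apply Finset.eq_univ_of_forall
  intro t; simp [t.isLt]

lemma S_mono {i j : ℕ} (h : i ≤ j) : S k i ≤ S k j := by
  apply Finset.sum_le_sum_of_subset
  intro t ht
  simp only [Finset.mem_filter, Finset.mem_univ, true_and] at *
  omega

lemma S_succ {i : ℕ} (h : i < m) : S k (i + 1) = S k i + k ⟨i, h⟩ := by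
  unfold S
  have hins : univ.filter (fun t : Fin m => (t:ℕ) < i + 1)
      = insert (⟨i, h⟩ : Fin m) (univ.filter (fun t : Fin m => (t:ℕ) < i)) := by
    ext t
    simp only [Finset.mem_insert, Finset.mem_filter, Finset.mem_univ, true_and]
    constructor
    · intro ht
      rcases Nat.lt_or_ge (t : ℕ) i with h' | h'
      · exact Or.inr h'
      · exact Or.inl (Fin.ext (show (t:ℕ) = i by omega))
    · rintro (rfl | ht)
      · simp
      · omega
  rw [hins, Finset.sum_insert (by simp), add_comm]

lemma S_block_le (i : Fin m) : S k (i : ℕ) + k i ≤ ∑ t, k t := by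
  have h1 : S k ((i : ℕ) + 1) = S k (i:ℕ) + k i := by
    rw [S_succ k i.isLt, Fin.eta]
  have h2 : S k ((i:ℕ) + 1) ≤ S k m := S_mono k i.isLt
  rw [S_top] at h2; omega

/-- the block of a position. -/
lemma exists_idx (htot : ∑ t, k t = N) (p : Fin N) :
    ∃ i : Fin m, S k (i:ℕ) ≤ (p:ℕ) ∧ (p:ℕ) < S k (i:ℕ) + k i := by
  have hm : 0 < m := by
    by_contra h
    have hm0 : m = 0 := by omega
    subst hm0
    simp only [Finset.univ_eq_empty, Finset.sum_empty] at htot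
    exact absurd p.isLt (by omega)
  have hne : (univ.filter (fun i : Fin m => S k (i:ℕ) ≤ (p:ℕ))).Nonempty := by
    refine ⟨⟨0, hm⟩, ?_⟩
    simp [S_zero]
  set F := univ.filter (fun i : Fin m => S k (i:ℕ) ≤ (p:ℕ)) with hF
  set i := F.max' hne with hi
  have hmem : i ∈ F := F.max'_mem hne
  rw [hF, Finset.mem_filter] at hmem
  refine ⟨i, hmem.2, ?_⟩
  by_contra hcon
  push_neg at hcon
  have hS : S k ((i:ℕ)+1) ≤ (p:ℕ) := by rw [S_succ k i.isLt, Fin.eta]; exact hcon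
  rcases Nat.lt_or_ge ((i:ℕ)+1) m with h | h
  · have hmem2 : (⟨(i:ℕ)+1, h⟩ : Fin m) ∈ F := by rw [hF, Finset.mem_filter]; exact ⟨mem_univ _, hS⟩
    have := F.le_max' _ hmem2
    rw [← hi, Fin.le_def] at this
    simp at this
  · have him : (i:ℕ) + 1 = m := by omega
    rw [him, S_top, htot] at hS
    omega

lemma idx_unique {p : Fin N} {i j : Fin m}
    (hi : S k (i:ℕ) ≤ (p:ℕ) ∧ (p:ℕ) < S k (i:ℕ) + k i)
    (hj : S k (j:ℕ) ≤ (p:ℕ) ∧ (p:ℕ) < S k (j:ℕ) + k j) : i = j := by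
  by_contra hij
  rcases Nat.lt_or_ge (i:ℕ) (j:ℕ) with h | h
  · have h2 : S k ((i:ℕ)+1) ≤ S k (j:ℕ) := S_mono k h
    rw [S_succ k i.isLt, Fin.eta] at h2
    omega
  · have hji : (j:ℕ) < (i:ℕ) := by
      rcases Nat.lt_or_ge (j:ℕ) (i:ℕ) with h' | h'
      · exact h'
      · exact absurd (Fin.ext (le_antisymm h' h)) hij
    have h2 : S k ((j:ℕ)+1) ≤ S k (i:ℕ) := S_mono k hji
    rw [S_succ k j.isLt, Fin.eta] at h2
    omega

noncomputable def idx (htot : ∑ t, k t = N) (p : Fin N) : Fin m :=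
  (exists_idx k htot p).choose

lemma idx_spec (htot : ∑ t, k t = N) (p : Fin N) :
    S k ((idx k htot p :Fin m):ℕ) ≤ (p:ℕ) ∧ (p:ℕ) < S k ((idx k htot p :Fin m):ℕ) + k (idx k htot p) :=
  (exists_idx k htot p).choose_spec

lemma idx_eq (htot : ∑ t, k t = N) {p : Fin N} {i : Fin m} (hi : S k (i:ℕ) ≤ (p:ℕ))
    (hi2 : (p:ℕ) < S k (i:ℕ) + k i) : idx k htot p = i :=
  idx_unique k (idx_spec k htot p) ⟨hi, hi2⟩

end Blocks

section Inflation
variable {N m : ℕ} {k : Fin m → ℕ} {π : Perm N} {σ : Perm m} {α : ∀ i, Perm (k i)}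

/-- value offset of a block. -/
def W (k : Fin m → ℕ) (σ : Perm m) (i : Fin m) : ℕ :=
  ∑ t ∈ univ.filter (fun t => σ t < σ i), k t

/-- the `i`-th block of positions. -/
def B (N : ℕ) (k : Fin m → ℕ) (i : Fin m) : Finset (Fin N) :=
  ico N (S k (i:ℕ)) (S k (i:ℕ) + k i)

lemma tot (hα : IsInflation σ α π) : ∑ t, k t = N := hα.2.1.symm

lemma filter_lt_fin (i : Fin m) :
    univ.filter (fun t : Fin m => t < i) = univ.filter (fun t : Fin m => (t:ℕ) < (i:ℕ)) := by
  ext t; simp only [Finset.mem_filter, Finset.mem_univ, true_and, Fin.lt_def]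

lemma W_mono {i j : Fin m} (hpos : ∀ i, 0 < k i) (h : σ i < σ j) :
    W k σ i + k i ≤ W k σ j := by
  have hsub : insert i (univ.filter (fun t => σ t < σ i)) ⊆ univ.filter (fun t => σ t < σ j) := by
    intro t ht
    rcases Finset.mem_insert.1 ht with rfl | ht
    · simp only [Finset.mem_filter, Finset.mem_univ, true_and]
      exact h
    · simp only [Finset.mem_filter, Finset.mem_univ, true_and] at *
      exact lt_trans ht h
  have h2 := Finset.sum_le_sum_of_subset (f := k) hsub
  rw [Finset.sum_insert (by simp only [Finset.mem_filter, Finset.mem_univ, true_and]; exact lt_irrefl _)] at h2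
  unfold W; omega

lemma W_lt_iff {i j : Fin m} (hpos : ∀ i, 0 < k i) : σ i < σ j ↔ W k σ i < W k σ j := by
  constructor
  · intro h
    have := W_mono hpos h
    have := hpos i
    omega
  · intro h
    rcases lt_trichotomy (σ i) (σ j) with h' | h' | h'
    · exact h'
    · have : W k σ i = W k σ j := by rw [σ.injective h']
      omega
    · have := W_mono hpos h'
      have := hpos j
      omega

lemma W_add_le (hα : IsInflation σ α π) (i : Fin m) : W k σ i + k i ≤ N := by
  have hsub : insert i (univ.filter (fun t => σ t < σ i)) ⊆ univ := fun t _ => mem_univ t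
  have h2 := Finset.sum_le_sum_of_subset (f := k) hsub
  rw [Finset.sum_insert (by simp only [Finset.mem_filter, Finset.mem_univ, true_and]; exact lt_irrefl _), tot hα] at h2
  unfold W; omega

lemma pi_bounds (hα : IsInflation σ α π) (p : Fin N) :
    W k σ (idx k (tot hα) p) ≤ (π p : ℕ) ∧
      (π p : ℕ) < W k σ (idx k (tot hα) p) + k (idx k (tot hα) p) := by
  set i := idx k (tot hα) p with hidef
  have hspec := idx_spec k (tot hα) p
  rw [← hidef] at hspec
  have hj : (p:ℕ) - S k (i:ℕ) < k i := by omega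
  have := hα.2.2 i ⟨(p:ℕ) - S k (i:ℕ), hj⟩ p
    (by rw [filter_lt_fin]; show (p:ℕ) = S k (i:ℕ) + ((p:ℕ) - S k (i:ℕ)); omega)
  have hb := (α i ⟨(p:ℕ) - S k (i:ℕ), hj⟩).isLt
  unfold W
  omega

lemma mem_B_iff (hα : IsInflation σ α π) {p : Fin N} {i : Fin m} :
    p ∈ B N k i ↔ idx k (tot hα) p = i := by
  rw [B, mem_ico]
  constructor
  · intro h; exact idx_eq k (tot hα) h.1 h.2
  · rintro rfl; exact idx_spec k (tot hα) p

lemma B_card (hα : IsInflation σ α π) (i : Fin m) : (B N k i).card = k i := by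
  have hb : S k (i:ℕ) + k i ≤ N := by
    have := S_block_le k i
    rw [tot hα] at this
    exact this
  rw [B, card_ico _ _ hb]
  omega

lemma pi_block (hα : IsInflation σ α π) (i : Fin m) :
    (B N k i).image π = ico N (W k σ i) (W k σ i + k i) := by
  apply Finset.eq_of_subset_of_card_le
  · intro x hx
    obtain ⟨p, hp, rfl⟩ := Finset.mem_image.1 hx
    have hip : idx k (tot hα) p = i := (mem_B_iff hα).1 hp
    have := pi_bounds hα p
    rw [hip] at this
    rw [mem_ico]; exact this
  · rw [Finset.card_image_of_injective _ π.injective, B_card hα,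
      card_ico _ _ (W_add_le hα i)]
    omega

lemma B_interval (hα : IsInflation σ α π) (i : Fin m) : IsPermInterval π (B N k i) := by
  refine ⟨isRange_ico, ?_⟩
  rw [pi_block hα]
  exact isRange_ico

lemma idx_of_val (hα : IsInflation σ α π) {p : Fin N} {i : Fin m}
    (h1 : W k σ i ≤ (π p : ℕ)) (h2 : (π p : ℕ) < W k σ i + k i) :
    idx k (tot hα) p = i := by
  set j := idx k (tot hα) p with hj
  have hb := pi_bounds hα p
  rw [← hj] at hb
  rcases lt_trichotomy (σ j) (σ i) with h | h | h
  · have := W_mono hα.1 h; omega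
  · exact σ.injective h
  · have := W_mono hα.1 h; omega

lemma B_nonempty (hα : IsInflation σ α π) (i : Fin m) : (B N k i).Nonempty := by
  rw [← Finset.card_pos, B_card hα]
  exact hα.1 i

lemma k_lt_N (hα : IsInflation σ α π) (hm : 2 ≤ m) (i : Fin m) : k i < N := by
  obtain ⟨t, ht⟩ : ∃ t : Fin m, t ≠ i := by
    rcases Nat.lt_or_ge 0 (i:ℕ) with h | h
    · exact ⟨⟨0, by omega⟩, by intro h'; rw [Fin.ext_iff] at h'; simp at h'; omega⟩
    · exact ⟨⟨1, by omega⟩, by intro h'; rw [Fin.ext_iff] at h'; simp at h'; omega⟩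
  have hsub : insert t {i} ⊆ (univ : Finset (Fin m)) := fun x _ => mem_univ x
  have hsum := Finset.sum_le_sum_of_subset (f := k) hsub
  rw [Finset.sum_insert (by simp [ht]), Finset.sum_singleton, tot hα] at hsum
  have := hα.1 t
  omega

lemma union_blocks_interval (hα : IsInflation σ α π) {T : Finset (Fin m)}
    (hT : IsPermInterval σ T) : IsPermInterval π (T.biUnion (B N k)) := by
  constructor
  · -- index side
    intro p q r hp hr hpq hqr
    rw [Finset.mem_biUnion] at *
    obtain ⟨i, hiT, hpB⟩ := hp
    obtain ⟨l, hlT, hrB⟩ := hr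
    refine ⟨idx k (tot hα) q, ?_, (mem_B_iff hα).2 rfl⟩
    set j := idx k (tot hα) q with hj
    have hqs := idx_spec k (tot hα) q
    rw [← hj] at hqs
    rw [B, mem_ico] at hpB hrB
    rw [Fin.le_def] at hpq hqr
    -- i ≤ j ≤ l as indices
    have hij : (i : Fin m) ≤ j := by
      rw [Fin.le_def]
      by_contra hcon
      push_neg at hcon
      have : S k ((j:ℕ)+1) ≤ S k (i:ℕ) := S_mono k hcon
      rw [S_succ k j.isLt, Fin.eta] at this
      omega
    have hjl : (j : Fin m) ≤ l := by
      rw [Fin.le_def]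
      by_contra hcon
      push_neg at hcon
      have : S k ((l:ℕ)+1) ≤ S k (j:ℕ) := S_mono k hcon
      rw [S_succ k l.isLt, Fin.eta] at this
      omega
    exact hT.1 hiT hlT hij hjl
  · -- value side
    intro u x w hu hw hux hxw
    simp only [Finset.biUnion_image, Finset.mem_biUnion] at hu hw ⊢
    obtain ⟨i, hiT, huB⟩ := hu
    obtain ⟨l, hlT, hwB⟩ := hw
    set q := π.symm x with hq
    have hπq : π q = x := π.apply_symm_apply x
    set j := idx k (tot hα) q with hj
    have hqb := pi_bounds hα q
    rw [← hj, hπq] at hqb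
    rw [pi_block hα, mem_ico] at huB hwB
    rw [Fin.le_def] at hux hxw
    have hij : σ i ≤ σ j := by
      by_contra hcon
      push_neg at hcon
      have := W_mono hα.1 hcon
      omega
    have hjl : σ j ≤ σ l := by
      by_contra hcon
      push_neg at hcon
      have := W_mono hα.1 hcon
      omega
    have hσj : σ j ∈ T.image σ :=
      hT.2 (Finset.mem_image_of_mem σ hiT) (Finset.mem_image_of_mem σ hlT) hij hjl
    obtain ⟨t, htT, htj⟩ := Finset.mem_image.1 hσj
    have htj' : t = j := σ.injective htj
    refine ⟨t, htT, ?_⟩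
    rw [← hπq]
    exact Finset.mem_image_of_mem π ((mem_B_iff hα).2 (hj.symm.trans htj'.symm))

lemma card_union_blocks (hα : IsInflation σ α π) (T : Finset (Fin m)) :
    (T.biUnion (B N k)).card = ∑ i ∈ T, k i := by
  rw [Finset.card_biUnion]
  · exact Finset.sum_congr rfl fun i _ => B_card hα i
  · intro i _ j _ hij
    simp only [Finset.disjoint_left]
    intro p hpi hpj
    exact hij (((mem_B_iff hα).1 hpi).symm.trans ((mem_B_iff hα).1 hpj))

lemma end_interior (hsimp : IsSimple σ) (hm : 3 ≤ m) (a : Fin m)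
    (ha : (a:ℕ) = 0 ∨ (a:ℕ) = m - 1) : (σ a : ℕ) ≠ 0 ∧ (σ a : ℕ) ≠ m - 1 := by
  by_contra hcon
  push_neg at hcon
  have hval : ((σ a : Fin m):ℕ) = 0 ∨ ((σ a :Fin m):ℕ) = m - 1 := by
    by_cases h : ((σ a :Fin m):ℕ) = 0
    · exact Or.inl h
    · exact Or.inr (hcon h)
  have herase : ∀ (x : Fin m), (x:ℕ) = 0 ∨ (x:ℕ) = m - 1 → IsRange (univ.erase x) := by
    intro x hx
    intro i j l hi hl hij hjl
    rw [Finset.mem_erase] at *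
    refine ⟨?_, mem_univ _⟩
    rintro rfl
    rw [Fin.le_def] at hij hjl
    rcases hx with hx | hx
    · exact hi.1 (Fin.ext (by omega))
    · have := l.isLt
      exact hl.1 (Fin.ext (by omega))
  have himg : (univ.erase a).image σ = univ.erase (σ a) := by
    ext x
    simp only [Finset.mem_image, Finset.mem_erase, Finset.mem_univ, and_true, true_and]
    constructor
    · rintro ⟨y, hy, rfl⟩
      exact fun h => hy (σ.injective h)
    · intro hx
      refine ⟨σ.symm x, ?_, σ.apply_symm_apply x⟩
      intro h
      apply hx
      rw [← h, σ.apply_symm_apply]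
  have hint : IsPermInterval σ (univ.erase a) := by
    refine ⟨herase a ha, ?_⟩
    rw [himg]
    exact herase _ hval
  have hcard : (univ.erase a).card = m - 1 := by
    rw [Finset.card_erase_of_mem (mem_univ a), Finset.card_univ, Fintype.card_fin]
  rcases hsimp _ hint with h | h <;> rw [hcard] at h <;> omega

lemma val_squeeze (hα : IsInflation σ α π) (hsimp : IsSimple σ) (hm : 3 ≤ m)
    {J : Finset (Fin N)} (hJ : IsPermInterval π J)
    (hmeet : ∀ i : Fin m, (J ∩ B N k i).Nonempty)
    {q : Fin N} (hext : ((idx k (tot hα) q : Fin m):ℕ) = 0 ∨ ((idx k (tot hα) q :Fin m):ℕ) = m - 1) :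
    q ∈ J := by
  set j := idx k (tot hα) q with hjdef
  have hqb := pi_bounds hα q
  rw [← hjdef] at hqb
  have hint := end_interior hsimp hm j hext
  set a : Fin m := σ.symm ⟨0, by omega⟩ with hadef
  set b : Fin m := σ.symm ⟨m-1, by omega⟩ with hbdef
  have hσa : σ a = ⟨0, by omega⟩ := σ.apply_symm_apply _
  have hσb : σ b = ⟨m-1, by omega⟩ := σ.apply_symm_apply _
  have hWa : W k σ a = 0 := by
    unfold W
    rw [Finset.filter_false_of_mem, Finset.sum_empty]
    intro t _
    rw [hσa, Fin.lt_def]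
    simp
  have haj : σ a < σ j := by
    rw [hσa, Fin.lt_def]
    show 0 < ((σ j :Fin m):ℕ)
    omega
  have hjb : σ j < σ b := by
    rw [hσb, Fin.lt_def]
    show ((σ j :Fin m):ℕ) < m - 1
    have := (σ j).isLt
    omega
  obtain ⟨u, hu⟩ := hmeet a
  obtain ⟨w, hw⟩ := hmeet b
  rw [Finset.mem_inter] at hu hw
  have hub := pi_bounds hα u
  rw [(mem_B_iff hα).1 hu.2] at hub
  have hwb := pi_bounds hα w
  rw [(mem_B_iff hα).1 hw.2] at hwb
  have h1 := W_mono hα.1 haj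
  have h2 := W_mono hα.1 hjb
  have hx : π q ∈ J.image π := by
    apply hJ.2 (Finset.mem_image_of_mem π hu.1) (Finset.mem_image_of_mem π hw.1)
    · rw [Fin.le_def]; omega
    · rw [Fin.le_def]; omega
  obtain ⟨q', hq'J, hq'⟩ := Finset.mem_image.1 hx
  rwa [← π.injective hq']

lemma inside_block (hα : IsInflation σ α π) (hsimp : IsSimple σ) (hm : 3 ≤ m)
    {J : Finset (Fin N)} (hJ : IsPermInterval π J) (hJc : J.card < N) :
    ∃ i : Fin m, J ⊆ B N k i := by
  rcases Finset.eq_empty_or_nonempty J with rfl | hne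
  · exact ⟨⟨0, by omega⟩, Finset.empty_subset _⟩
  classical
  set T : Finset (Fin m) := univ.filter (fun i => (J ∩ B N k i).Nonempty) with hTdef
  have hidxT : ∀ p ∈ J, idx k (tot hα) p ∈ T := by
    intro p hp
    rw [hTdef, Finset.mem_filter]
    exact ⟨mem_univ _, ⟨p, Finset.mem_inter.2 ⟨hp, (mem_B_iff hα).2 rfl⟩⟩⟩
  have hTne : T.Nonempty := ⟨_, hidxT _ hne.choose_spec⟩
  rcases Nat.lt_or_ge T.card 2 with hT1 | hT2
  · -- all of J in one block
    have hcpos := Finset.card_pos.2 hTne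
    obtain ⟨i, hi⟩ := Finset.card_eq_one.1 (by omega : T.card = 1)
    refine ⟨i, fun p hp => ?_⟩
    have := hidxT p hp
    rw [hi, Finset.mem_singleton] at this
    rw [← this]
    exact (mem_B_iff hα).2 rfl
  · -- T is an interval of σ
    exfalso
    have hTrange : IsRange T := by
      intro i j l hi hl hij hjl
      rw [hTdef, Finset.mem_filter] at hi hl ⊢
      refine ⟨mem_univ _, ?_⟩
      obtain ⟨p, hp⟩ := hi.2
      obtain ⟨r, hr⟩ := hl.2
      rw [Finset.mem_inter] at hp hr
      rcases eq_or_lt_of_le hij with rfl | hij'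
      · exact ⟨p, Finset.mem_inter.2 hp⟩
      rcases eq_or_lt_of_le hjl with rfl | hjl'
      · exact ⟨r, Finset.mem_inter.2 hr⟩
      have hq : S k (j:ℕ) < N := by
        have h1 := S_block_le k j
        rw [tot hα] at h1
        have := hα.1 j
        omega
      set q : Fin N := ⟨S k (j:ℕ), hq⟩ with hqdef
      have hqB : q ∈ B N k j := by
        rw [B, mem_ico]
        show S k (j:ℕ) ≤ S k (j:ℕ) ∧ S k (j:ℕ) < S k (j:ℕ) + k j
        have := hα.1 j
        omega
      rw [B, mem_ico] at hp hr
      have hpq : p ≤ q := by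
        rw [Fin.le_def]
        have h1 : S k ((i:ℕ)+1) ≤ S k (j:ℕ) := S_mono k (by rw [Fin.lt_def] at hij'; omega)
        rw [S_succ k i.isLt, Fin.eta] at h1
        show (p:ℕ) ≤ S k (j:ℕ)
        omega
      have hqr : q ≤ r := by
        rw [Fin.le_def]
        have h1 : S k ((j:ℕ)+1) ≤ S k (l:ℕ) := S_mono k (by rw [Fin.lt_def] at hjl'; omega)
        rw [S_succ k j.isLt, Fin.eta] at h1
        show S k (j:ℕ) ≤ (r:ℕ)
        omega
      exact ⟨q, Finset.mem_inter.2 ⟨hJ.1 hp.1 hr.1 hpq hqr, hqB⟩⟩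
    have hTimg : IsRange (T.image σ) := by
      intro x y z hx hz hxy hyz
      obtain ⟨i, hiT, hix⟩ := Finset.mem_image.1 hx
      obtain ⟨l, hlT, hlz⟩ := Finset.mem_image.1 hz
      set j : Fin m := σ.symm y with hjdef
      have hjy : σ j = y := σ.apply_symm_apply y
      rcases eq_or_lt_of_le hxy with rfl | hxy'
      · exact hix ▸ Finset.mem_image_of_mem σ hiT
      rcases eq_or_lt_of_le hyz with rfl | hyz'
      · exact hlz ▸ Finset.mem_image_of_mem σ hlT
      have hσij : σ i < σ j := by rw [hjy, hix]; exact hxy'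
      have hσjl : σ j < σ l := by rw [hjy, hlz]; exact hyz'
      have h1 := W_mono hα.1 hσij
      have h2 := W_mono hα.1 hσjl
      rw [hTdef, Finset.mem_filter] at hiT hlT
      obtain ⟨p, hp⟩ := hiT.2
      obtain ⟨r, hr⟩ := hlT.2
      rw [Finset.mem_inter] at hp hr
      have hpb := pi_bounds hα p
      rw [(mem_B_iff hα).1 hp.2] at hpb
      have hrb := pi_bounds hα r
      rw [(mem_B_iff hα).1 hr.2] at hrb
      have hWjN : W k σ j < N := by
        have := W_add_le hα j
        have := hα.1 j
        omega
      set x' : Fin N := ⟨W k σ j, hWjN⟩ with hx'def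
      have hx'mem : x' ∈ J.image π := by
        apply hJ.2 (Finset.mem_image_of_mem π hp.1) (Finset.mem_image_of_mem π hr.1)
        · rw [Fin.le_def]; show (π p : ℕ) ≤ W k σ j; omega
        · rw [Fin.le_def]; show W k σ j ≤ (π r : ℕ); omega
      obtain ⟨q, hqJ, hqx⟩ := Finset.mem_image.1 hx'mem
      have hqidx : idx k (tot hα) q = j := by
        apply idx_of_val hα
        · rw [hqx]
        · rw [hqx]
          show W k σ j < W k σ j + k j
          have := hα.1 j
          omega
      rw [← hjy]
      apply Finset.mem_image_of_mem σ
      rw [hTdef, Finset.mem_filter]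
      exact ⟨mem_univ _, ⟨q, Finset.mem_inter.2 ⟨hqJ, (mem_B_iff hα).2 hqidx⟩⟩⟩
    have hTcard : T.card = m := by
      rcases hsimp T ⟨hTrange, hTimg⟩ with h | h
      · omega
      · exact h
    have hTuniv : T = univ := Finset.eq_univ_of_card T (by rw [hTcard, Fintype.card_fin])
    have hmeet : ∀ i : Fin m, (J ∩ B N k i).Nonempty := by
      intro i
      have hi : i ∈ T := hTuniv ▸ mem_univ i
      rw [hTdef, Finset.mem_filter] at hi
      exact hi.2
    have hJuniv : J = univ := by
      apply Finset.eq_univ_of_forall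
      intro q
      set j := idx k (tot hα) q with hjdef
      have hjspec := idx_spec k (tot hα) q
      rw [← hjdef] at hjspec
      rcases Nat.lt_or_ge 0 (j:ℕ) with hj0 | hj0
      rotate_left
      · exact val_squeeze hα hsimp hm hJ hmeet (Or.inl (by omega))
      rcases Nat.lt_or_ge (j:ℕ) (m-1) with hjtop | hjtop
      rotate_left
      · exact val_squeeze hα hsimp hm hJ hmeet (Or.inr (by rw [← hjdef]; have := j.isLt; omega))
      · -- interior index: squeeze by blocks 0 and m - 1
        obtain ⟨p, hp⟩ := hmeet ⟨0, by omega⟩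
        obtain ⟨r, hr⟩ := hmeet ⟨m-1, by omega⟩
        rw [Finset.mem_inter] at hp hr
        have hp2 : (p:ℕ) < S k 0 + k ⟨0, by omega⟩ := by
          have := hp.2
          rw [B, mem_ico] at this
          exact this.2
        have hr2 : S k (m-1) ≤ (r:ℕ) := by
          have := hr.2
          rw [B, mem_ico] at this
          exact this.1
        apply hJ.1 hp.1 hr.1
        · rw [Fin.le_def]
          have h1 : S k (0+1) ≤ S k (j:ℕ) := S_mono k (by omega)
          rw [S_succ k (by omega : 0 < m), S_zero] at h1
          rw [S_zero] at hp2
          omega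
        · rw [Fin.le_def]
          have h1 : S k ((j:ℕ)+1) ≤ S k (m-1) := S_mono k (by omega)
          rw [S_succ k j.isLt, Fin.eta] at h1
          omega
    rw [hJuniv, Finset.card_univ, Fintype.card_fin] at hJc
    omega

end Inflation

section Construct
variable {N m : ℕ} {k : Fin m → ℕ} {π : Perm N}

lemma card_ico_gen {n : ℕ} (a b : ℕ) : (ico n a b).card = min b n - a := by
  have h : ico n a b = ico n a (min b n) := by
    ext p; rw [mem_ico, mem_ico]; have := p.isLt; omega
  rw [h, card_ico _ _ (Nat.min_le_right b n)]

lemma B_card' (htot : ∑ t, k t = N) (i : Fin m) : (B N k i).card = k i := by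
  have hb : S k (i:ℕ) + k i ≤ N := by
    have := S_block_le k i; rw [htot] at this; exact this
  rw [B, card_ico _ _ hb]; omega

lemma mem_B_iff' (htot : ∑ t, k t = N) {p : Fin N} {i : Fin m} :
    p ∈ B N k i ↔ idx k htot p = i := by
  rw [B, mem_ico]
  constructor
  · intro h; exact idx_eq k htot h.1 h.2
  · rintro rfl; exact idx_spec k htot p

lemma construct (hpos : ∀ i, 0 < k i) (htot : ∑ t, k t = N)
    (hint : ∀ i, IsPermInterval π (B N k i)) :
    ∃ (σ : Perm m) (α : ∀ i, Perm (k i)), IsInflation σ α π := by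
  classical
  have hBne : ∀ i, (B N k i).Nonempty := by
    intro i
    rw [← Finset.card_pos, B_card' htot]
    exact hpos i
  have himgne : ∀ i, ((B N k i).image π).Nonempty := fun i => (hBne i).image π
  set vv : Fin m → ℕ := fun i => ((((B N k i).image π).min' (himgne i) : Fin N) : ℕ) with hvvdef
  have himgB : ∀ i, (B N k i).image π = ico N (vv i) (vv i + k i) := by
    intro i
    have h1 := range_rep (hint i).2 (himgne i)
    rwa [Finset.card_image_of_injective _ π.injective, B_card' htot] at h1
  have hvN : ∀ i, vv i + k i ≤ N := by
    intro i
    have h1 : (ico N (vv i) (vv i + k i)).card = k i := by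
      rw [← himgB i, Finset.card_image_of_injective _ π.injective, B_card' htot]
    rw [card_ico_gen] at h1
    have h2 : vv i < N := (((B N k i).image π).min' (himgne i)).isLt
    omega
  have himgdisj : ∀ i j : Fin m, i ≠ j → ∀ x : Fin N,
      x ∈ (B N k i).image π → x ∈ (B N k j).image π → False := by
    intro i j hij x hxi hxj
    obtain ⟨p, hp, hpx⟩ := Finset.mem_image.1 hxi
    obtain ⟨q, hq, hqx⟩ := Finset.mem_image.1 hxj
    have : p = q := π.injective (hpx.trans hqx.symm)
    subst this
    exact hij (((mem_B_iff' htot).1 hp).symm.trans ((mem_B_iff' htot).1 hq))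
  have hvmem : ∀ i, (⟨vv i, lt_of_lt_of_le (by have := hpos i; omega) (hvN i)⟩ : Fin N)
      ∈ (B N k i).image π := by
    intro i
    have he : (⟨vv i, lt_of_lt_of_le (by have := hpos i; omega) (hvN i)⟩ : Fin N)
        = ((B N k i).image π).min' (himgne i) := Fin.ext rfl
    rw [he]
    exact Finset.min'_mem _ _
  have hvinj : Function.Injective vv := by
    intro i j hij
    by_contra hne
    apply himgdisj i j hne ⟨vv i, lt_of_lt_of_le (by have := hpos i; omega) (hvN i)⟩ (hvmem i)
    rw [himgB j, mem_ico]
    have := hpos j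
    show vv j ≤ vv i ∧ vv i < vv j + k j
    omega
  have hRlt : ∀ i : Fin m, (univ.filter fun t => vv t < vv i).card < m := by
    intro i
    have hsub : (univ.filter fun t => vv t < vv i) ⊆ univ.erase i := by
      intro t ht
      rw [Finset.mem_filter] at ht
      rw [Finset.mem_erase]
      exact ⟨fun h => by rw [h] at ht; omega, mem_univ _⟩
    have := Finset.card_le_card hsub
    rw [Finset.card_erase_of_mem (mem_univ i), Finset.card_univ, Fintype.card_fin] at this
    have hm : 0 < m := i.pos
    omega
  have hRmono : ∀ i j, vv i < vv j →
      (univ.filter fun t => vv t < vv i).card < (univ.filter fun t => vv t < vv j).card := by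
    intro i j hij
    have hsub : insert i (univ.filter fun t => vv t < vv i) ⊆ (univ.filter fun t => vv t < vv j) := by
      intro t ht
      rcases Finset.mem_insert.1 ht with rfl | ht
      · rw [Finset.mem_filter]; exact ⟨mem_univ _, hij⟩
      · rw [Finset.mem_filter] at ht ⊢
        exact ⟨mem_univ _, by omega⟩
    have := Finset.card_le_card hsub
    rw [Finset.card_insert_of_notMem (by rw [Finset.mem_filter]; intro h; omega)] at this
    omega
  have hRiff : ∀ i j : Fin m, (univ.filter fun t => vv t < vv i).card
      < (univ.filter fun t => vv t < vv j).card ↔ vv i < vv j := by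
    intro i j
    constructor
    · intro h
      rcases lt_trichotomy (vv i) (vv j) with h' | h' | h'
      · exact h'
      · rw [hvinj h'] at h; omega
      · have := hRmono _ _ h'; omega
    · exact hRmono i j
  set σf : Fin m → Fin m := fun i => ⟨(univ.filter fun t => vv t < vv i).card, hRlt i⟩ with hσfdef
  have hσinj : Function.Injective σf := by
    intro i j hij0
    have hij : (univ.filter fun t => vv t < vv i).card
        = (univ.filter fun t => vv t < vv j).card := congrArg Fin.val hij0
    by_contra hne
    rcases lt_trichotomy (vv i) (vv j) with h' | h' | h'
    · have := hRmono _ _ h'; omega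
    · exact hne (hvinj h')
    · have := hRmono _ _ h'; omega
  set σ : Perm m := Equiv.ofBijective σf ((Finite.injective_iff_bijective).1 hσinj) with hσdef
  have hσapp : ∀ i, σ i = σf i := fun i => rfl
  have hσlt : ∀ i j, σ i < σ j ↔ vv i < vv j := by
    intro i j
    rw [hσapp, hσapp, Fin.lt_def]
    exact hRiff i j
  have hvsum : ∀ i, ∑ t ∈ univ.filter (fun t => vv t < vv i), k t = vv i := by
    intro i
    have hset : ico N 0 (vv i) =
        (univ.filter (fun t => vv t < vv i)).biUnion (fun t => (B N k t).image π) := by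
      ext x
      rw [mem_ico, Finset.mem_biUnion]
      constructor
      · intro hx
        set t := idx k htot (π.symm x) with htdef
        have hxmem : x ∈ (B N k t).image π := by
          refine Finset.mem_image.2 ⟨π.symm x, (mem_B_iff' htot).2 rfl, π.apply_symm_apply x⟩
        have hxv : vv t ≤ (x:ℕ) ∧ (x:ℕ) < vv t + k t := by
          have := hxmem
          rw [himgB t, mem_ico] at this
          exact this
        refine ⟨t, ?_, hxmem⟩
        rw [Finset.mem_filter]
        exact ⟨mem_univ _, by omega⟩
      · rintro ⟨t, ht, hxt⟩
        rw [Finset.mem_filter] at ht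
        have hxv : vv t ≤ (x:ℕ) ∧ (x:ℕ) < vv t + k t := by
          rw [himgB t, mem_ico] at hxt
          exact hxt
        refine ⟨Nat.zero_le _, ?_⟩
        by_contra hcon
        push_neg at hcon
        apply himgdisj t i (fun h => by rw [h] at ht; omega)
          ⟨vv i, lt_of_lt_of_le (by have := hpos i; omega) (hvN i)⟩
        · rw [himgB t, mem_ico]
          show vv t ≤ vv i ∧ vv i < vv t + k t
          omega
        · exact hvmem i
    have hcard1 : (ico N 0 (vv i)).card = vv i := by
      rw [card_ico_gen]
      have h2 : vv i < N := (((B N k i).image π).min' (himgne i)).isLt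
      omega
    have hcard2 : ((univ.filter (fun t => vv t < vv i)).biUnion (fun t => (B N k t).image π)).card
        = ∑ t ∈ univ.filter (fun t => vv t < vv i), k t := by
      rw [Finset.card_biUnion]
      · apply Finset.sum_congr rfl
        intro t _
        rw [Finset.card_image_of_injective _ π.injective, B_card' htot]
      · intro a _ b _ hab
        rw [Function.onFun, Finset.disjoint_left]
        intro x hxa hxb
        exact himgdisj a b hab x hxa hxb
    rw [← hcard2, ← hset, hcard1]
  set pin : ∀ i : Fin m, Fin (k i) → Fin N := fun i j =>
    ⟨S k (i:ℕ) + (j:ℕ), by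
      have h1 := S_block_le k i
      rw [htot] at h1
      have := j.isLt
      omega⟩ with hpindef
  have hπpin : ∀ (i : Fin m) (j : Fin (k i)),
      vv i ≤ (π (pin i j) : ℕ) ∧ (π (pin i j) : ℕ) < vv i + k i := by
    intro i j
    have hmem : pin i j ∈ B N k i := by
      rw [B, mem_ico]
      show S k (i:ℕ) ≤ S k (i:ℕ) + (j:ℕ) ∧ S k (i:ℕ) + (j:ℕ) < S k (i:ℕ) + k i
      have := j.isLt
      omega
    have := Finset.mem_image_of_mem π hmem
    rw [himgB i, mem_ico] at this
    exact this
  set αf : ∀ i : Fin m, Fin (k i) → Fin (k i) := fun i j =>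
    ⟨(π (pin i j) : ℕ) - vv i, by have := hπpin i j; omega⟩ with hαfdef
  have hαinj : ∀ i, Function.Injective (αf i) := by
    intro i j j' hjj0
    have hjj : (π (pin i j) : ℕ) - vv i = (π (pin i j') : ℕ) - vv i := congrArg Fin.val hjj0
    have h1 := hπpin i j
    have h2 := hπpin i j'
    have heq : (π (pin i j) : ℕ) = (π (pin i j') : ℕ) := by omega
    have hpp : pin i j = pin i j' := π.injective (Fin.ext heq)
    have h3 : S k (i:ℕ) + (j:ℕ) = S k (i:ℕ) + (j':ℕ) := congrArg Fin.val hpp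
    exact Fin.ext (by omega)
  refine ⟨σ, fun i => Equiv.ofBijective (αf i) ((Finite.injective_iff_bijective).1 (hαinj i)),
    hpos, htot.symm, ?_⟩
  intro i j p hp
  rw [filter_lt_fin] at hp
  have hp' : (p:ℕ) = S k (i:ℕ) + (j:ℕ) := hp
  have hpe : p = pin i j := Fin.ext hp'
  have hfilter : (univ.filter fun t => σ t < σ i) = univ.filter (fun t => vv t < vv i) := by
    ext t
    rw [Finset.mem_filter, Finset.mem_filter]
    rw [hσlt]
  rw [hpe, hfilter, hvsum i]
  show (π (pin i j) : ℕ) = vv i + ((αf i j : Fin (k i)) : ℕ)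
  have h1 := hπpin i j
  show (π (pin i j) : ℕ) = vv i + ((π (pin i j) : ℕ) - vv i)
  omega

end Construct

section Decomp
variable {N : ℕ}

def SumDec (π : Perm N) : Prop :=
  ∃ c, 0 < c ∧ c < N ∧ ∀ p : Fin N, (p:ℕ) < c ↔ (π p : ℕ) < c

def SkewDec (π : Perm N) : Prop :=
  ∃ c, 0 < c ∧ c < N ∧ ∀ p : Fin N, (p:ℕ) < c ↔ N - c ≤ (π p : ℕ)

lemma perm2_simple (σ : Perm 2) : IsSimple σ := by
  intro I _
  have := Finset.card_le_univ I
  rw [Fintype.card_fin] at this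
  omega

lemma two_blocks (π : Perm N) (c : ℕ) (h0 : 0 < c) (hc : c < N)
    (h1 : IsRange ((ico N 0 c).image π)) (h2 : IsRange ((ico N c N).image π)) :
    ∃ (σ : Perm 2) (α : ∀ i : Fin 2, Perm (![c, N - c] i)), IsInflation σ α π := by
  apply construct
  · intro i
    fin_cases i <;> simp <;> omega
  · rw [Fin.sum_univ_two]
    simp
    omega
  · intro i
    fin_cases i
    · have hB : B N ![c, N-c] (⟨0, by omega⟩ : Fin 2) = ico N 0 c := by
        rw [B]
        have hS : S (![c, N-c] : Fin 2 → ℕ) ((⟨0, by omega⟩ : Fin 2) : ℕ) = 0 := S_zero _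
        rw [hS]
        congr 1
        simp
      rw [hB]
      exact ⟨isRange_ico, h1⟩
    · have hB : B N ![c, N-c] (⟨1, by omega⟩ : Fin 2) = ico N c N := by
        rw [B]
        have hS : S (![c, N-c] : Fin 2 → ℕ) 1 = c := by
          rw [S_succ (![c, N-c] : Fin 2 → ℕ) (by omega : 0 < 2), S_zero]
          simp
        show ico N (S (![c, N-c] : Fin 2 → ℕ) 1) (S (![c, N-c] : Fin 2 → ℕ) 1 + ![c, N-c] 1) = _
        rw [hS]
        have : (![c, N-c] : Fin 2 → ℕ) 1 = N - c := by simp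
        rw [this]
        congr 1
        omega
      rw [hB]
      exact ⟨isRange_ico, h2⟩

lemma sumdec_exists (π : Perm N) (h : SumDec π) :
    ∃ (mm : ℕ) (σ : Perm mm) (k : Fin mm → ℕ) (α : ∀ i, Perm (k i)),
      2 ≤ mm ∧ IsSimple σ ∧ IsInflation σ α π := by
  obtain ⟨c, h0, hc, hiff⟩ := h
  have h1 : (ico N 0 c).image π = ico N 0 c := by
    ext x
    rw [Finset.mem_image, mem_ico]
    constructor
    · rintro ⟨p, hp, rfl⟩
      rw [mem_ico] at hp
      exact ⟨Nat.zero_le _, (hiff p).1 hp.2⟩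
    · intro hx
      refine ⟨π.symm x, ?_, π.apply_symm_apply x⟩
      rw [mem_ico]
      refine ⟨Nat.zero_le _, ?_⟩
      rw [hiff]
      rw [π.apply_symm_apply]
      exact hx.2
  have h2 : (ico N c N).image π = ico N c N := by
    ext x
    rw [Finset.mem_image, mem_ico]
    constructor
    · rintro ⟨p, hp, rfl⟩
      rw [mem_ico] at hp
      have : ¬ ((p:ℕ) < c) := by omega
      rw [hiff] at this
      exact ⟨by omega, (π p).isLt⟩
    · intro hx
      refine ⟨π.symm x, ?_, π.apply_symm_apply x⟩
      rw [mem_ico]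
      have : ¬ ((x:ℕ) < c) := by omega
      rw [← π.apply_symm_apply x, ← hiff] at this
      exact ⟨by omega, (π.symm x).isLt⟩
  obtain ⟨σ, α, hα⟩ := two_blocks π c h0 hc (by rw [h1]; exact isRange_ico)
    (by rw [h2]; exact isRange_ico)
  exact ⟨2, σ, _, α, le_refl 2, perm2_simple σ, hα⟩

lemma skewdec_exists (π : Perm N) (h : SkewDec π) :
    ∃ (mm : ℕ) (σ : Perm mm) (k : Fin mm → ℕ) (α : ∀ i, Perm (k i)),
      2 ≤ mm ∧ IsSimple σ ∧ IsInflation σ α π := by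
  obtain ⟨c, h0, hc, hiff⟩ := h
  have h1 : (ico N 0 c).image π = ico N (N - c) N := by
    ext x
    rw [Finset.mem_image, mem_ico]
    constructor
    · rintro ⟨p, hp, rfl⟩
      rw [mem_ico] at hp
      exact ⟨(hiff p).1 hp.2, (π p).isLt⟩
    · intro hx
      refine ⟨π.symm x, ?_, π.apply_symm_apply x⟩
      rw [mem_ico]
      refine ⟨Nat.zero_le _, ?_⟩
      rw [hiff, π.apply_symm_apply]
      exact hx.1
  have h2 : (ico N c N).image π = ico N 0 (N - c) := by
    ext x
    rw [Finset.mem_image, mem_ico]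
    constructor
    · rintro ⟨p, hp, rfl⟩
      rw [mem_ico] at hp
      have : ¬ ((p:ℕ) < c) := by omega
      rw [hiff] at this
      exact ⟨Nat.zero_le _, by omega⟩
    · intro hx
      refine ⟨π.symm x, ?_, π.apply_symm_apply x⟩
      rw [mem_ico]
      have : ¬ (N - c ≤ (x:ℕ)) := by omega
      rw [← π.apply_symm_apply x, ← hiff] at this
      exact ⟨by omega, (π.symm x).isLt⟩
  obtain ⟨σ, α, hα⟩ := two_blocks π c h0 hc (by rw [h1]; exact isRange_ico)
    (by rw [h2]; exact isRange_ico)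
  exact ⟨2, σ, _, α, le_refl 2, perm2_simple σ, hα⟩

end Decomp

section Classes
variable {N : ℕ} {π : Perm N}

def PI (π : Perm N) (I : Finset (Fin N)) : Prop := IsPermInterval π I ∧ I.card < N

lemma cover_decomp (hN : 2 ≤ N) {I J : Finset (Fin N)}
    (hI : IsPermInterval π I) (hJ : IsPermInterval π J)
    (hIc : I.card < N) (hJc : J.card < N)
    (h0 : (⟨0, by omega⟩ : Fin N) ∈ I)
    (hcover : ∀ p : Fin N, p ∈ I ∨ p ∈ J) : SumDec π ∨ SkewDec π := by
  have hne : I.Nonempty := ⟨_, h0⟩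
  have hmin : ((I.min' hne : Fin N) : ℕ) = 0 :=
    Nat.le_zero.1 (Fin.le_def.1 (I.min'_le _ h0))
  have hIeq : I = ico N 0 I.card := by
    have := range_rep hI.1 hne
    rwa [hmin, Nat.zero_add] at this
  set c := I.card with hcdef
  have h0c : 0 < c := Finset.card_pos.2 hne
  have hXne : (I.image π).Nonempty := hne.image π
  set v := (((I.image π).min' hXne : Fin N) : ℕ) with hvdef
  have hXeq : I.image π = ico N v (v + c) := by
    have := range_rep hI.2 hXne
    rwa [Finset.card_image_of_injective _ π.injective] at this
  have hvc : v + c ≤ N := by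
    have h1 : (ico N v (v + c)).card = c := by
      rw [← hXeq, Finset.card_image_of_injective _ π.injective]
    rw [card_ico_gen] at h1
    have h2 : v < N := ((I.image π).min' hXne).isLt
    omega
  rcases Nat.eq_zero_or_pos v with hv0 | hvpos
  · -- Sum decomposition
    left
    refine ⟨c, h0c, hIc, fun p => ?_⟩
    constructor
    · intro hp
      have hpI : p ∈ I := by rw [hIeq, mem_ico]; exact ⟨Nat.zero_le _, hp⟩
      have := Finset.mem_image_of_mem π hpI
      rw [hXeq, mem_ico] at this
      omega
    · intro hp
      have hmem : π p ∈ I.image π := by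
        rw [hXeq, mem_ico]
        omega
      obtain ⟨q, hq, hqp⟩ := Finset.mem_image.1 hmem
      have : q = p := π.injective hqp
      subst this
      rw [hIeq, mem_ico] at hq
      exact hq.2
  rcases Nat.lt_or_ge (v + c) N with hvmid | hvtop
  · -- middle: contradiction
    exfalso
    set y0 : Fin N := ⟨0, by omega⟩ with hy0def
    have hy0v : (y0 : ℕ) = 0 := rfl
    set yt : Fin N := ⟨N - 1, by omega⟩ with hytdef
    have hytv : (yt : ℕ) = N - 1 := rfl
    have hy0 : y0 ∈ J.image π := by
      rcases hcover (π.symm y0) with h | h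
      · exfalso
        have hmem : y0 ∈ I.image π :=
          Finset.mem_image.2 ⟨π.symm y0, h, π.apply_symm_apply y0⟩
        rw [hXeq, mem_ico] at hmem
        omega
      · exact Finset.mem_image.2 ⟨π.symm y0, h, π.apply_symm_apply y0⟩
    have hyt : yt ∈ J.image π := by
      rcases hcover (π.symm yt) with h | h
      · exfalso
        have hmem : yt ∈ I.image π :=
          Finset.mem_image.2 ⟨π.symm yt, h, π.apply_symm_apply yt⟩
        rw [hXeq, mem_ico] at hmem
        omega
      · exact Finset.mem_image.2 ⟨π.symm yt, h, π.apply_symm_apply yt⟩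
    have huniv : J.image π = univ := by
      apply Finset.eq_univ_of_forall
      intro x
      apply hJ.2 hy0 hyt
      · rw [Fin.le_def]; omega
      · rw [Fin.le_def]; have := x.isLt; omega
    have hcc : (J.image π).card = N := by rw [huniv, Finset.card_univ, Fintype.card_fin]
    rw [Finset.card_image_of_injective _ π.injective] at hcc
    omega
  · -- Skew decomposition
    right
    have hveq : v = N - c := by omega
    refine ⟨c, h0c, hIc, fun p => ?_⟩
    constructor
    · intro hp
      have hpI : p ∈ I := by rw [hIeq, mem_ico]; exact ⟨Nat.zero_le _, hp⟩
      have := Finset.mem_image_of_mem π hpI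
      rw [hXeq, mem_ico] at this
      omega
    · intro hp
      have hmem : π p ∈ I.image π := by
        rw [hXeq, mem_ico]
        constructor
        · omega
        · have := (π p).isLt; omega
      obtain ⟨q, hq, hqp⟩ := Finset.mem_image.1 hmem
      have : q = p := π.injective hqp
      subst this
      rw [hIeq, mem_ico] at hq
      exact hq.2

lemma proper_union (hN : 2 ≤ N) (hC : ¬ SumDec π ∧ ¬ SkewDec π) {I J : Finset (Fin N)}
    (hI : PI π I) (hJ : PI π J) (hover : (I ∩ J).Nonempty) : PI π (I ∪ J) := by
  have hrange : IsRange (I ∪ J) := isRange_union hI.1.1 hJ.1.1 hover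
  have himg : IsRange ((I ∪ J).image π) := by
    rw [Finset.image_union]
    apply isRange_union hI.1.2 hJ.1.2
    obtain ⟨z, hz⟩ := hover
    rw [Finset.mem_inter] at hz
    exact ⟨π z, Finset.mem_inter.2 ⟨Finset.mem_image_of_mem π hz.1, Finset.mem_image_of_mem π hz.2⟩⟩
  refine ⟨⟨hrange, himg⟩, ?_⟩
  rcases Nat.lt_or_ge (I ∪ J).card N with h | h
  · exact h
  exfalso
  have hcard : (I ∪ J).card = N := by
    have := Finset.card_le_univ (I ∪ J)
    rw [Fintype.card_fin] at this
    omega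
  have huniv : I ∪ J = univ := Finset.eq_univ_of_card _ (by rw [hcard, Fintype.card_fin])
  have hcover : ∀ p : Fin N, p ∈ I ∨ p ∈ J := by
    intro p
    have : p ∈ I ∪ J := huniv ▸ mem_univ p
    exact Finset.mem_union.1 this
  rcases hcover ⟨0, by omega⟩ with h0 | h0
  · rcases cover_decomp hN hI.1 hJ.1 hI.2 hJ.2 h0 hcover with h | h
    · exact hC.1 h
    · exact hC.2 h
  · rcases cover_decomp hN hJ.1 hI.1 hJ.2 hI.2 h0 (fun p => (hcover p).symm) with h | h
    · exact hC.1 h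
    · exact hC.2 h

open Classical in
noncomputable def Cl (π : Perm N) (p : Fin N) : Finset (Fin N) :=
  insert p ((Finset.univ.filter (fun I : Finset (Fin N) => PI π I ∧ p ∈ I)).biUnion id)

lemma mem_Cl_self (p : Fin N) : p ∈ Cl π p := Finset.mem_insert_self _ _

lemma Cl_max {I : Finset (Fin N)} (hI : PI π I) {p : Fin N} (hp : p ∈ I) : I ⊆ Cl π p := by
  intro x hx
  apply Finset.mem_insert_of_mem
  classical
  rw [Finset.mem_biUnion]
  refine ⟨I, ?_, hx⟩
  simp only [Finset.mem_filter, Finset.mem_univ, true_and]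
  constructor
  · convert hI
  · exact hp

lemma singleton_PI (hN : 2 ≤ N) (p : Fin N) : PI π {p} := by
  refine ⟨⟨?_, ?_⟩, by rw [Finset.card_singleton]; omega⟩
  · intro i j l hi hl hij hjl
    rw [Finset.mem_singleton] at *
    subst hi; subst hl
    exact le_antisymm hjl hij
  · rw [Finset.image_singleton]
    intro i j l hi hl hij hjl
    rw [Finset.mem_singleton] at *
    subst hi; subst hl
    exact le_antisymm hjl hij

lemma Cl_PI (hN : 2 ≤ N) (hC : ¬ SumDec π ∧ ¬ SkewDec π) (p : Fin N) : PI π (Cl π p) := by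
  classical
  suffices h : ∀ F : Finset (Finset (Fin N)), (∀ I ∈ F, PI π I ∧ p ∈ I) →
      PI π (insert p (F.biUnion id)) by
    apply h
    intro I hI
    simp only [Finset.mem_filter, Finset.mem_univ, true_and] at hI
    convert hI using 2
  intro F
  induction F using Finset.induction_on with
  | empty =>
    intro _
    have : insert p ((∅ : Finset (Finset (Fin N))).biUnion id) = {p} := by
      rw [Finset.biUnion_empty]
      rfl
    rw [this]
    exact singleton_PI hN p
  | @insert a F ha IH =>
    intro hmem
    have hPIa : PI π a ∧ p ∈ a := hmem a (Finset.mem_insert_self a F)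
    have hrest : PI π (insert p (F.biUnion id)) :=
      IH (fun I hI => hmem I (Finset.mem_insert_of_mem hI))
    have heq : insert p ((insert a F).biUnion id) = a ∪ insert p (F.biUnion id) := by
      rw [Finset.biUnion_insert]
      ext q
      simp only [Finset.mem_insert, Finset.mem_union, id]
      tauto
    rw [heq]
    apply proper_union hN hC hPIa.1 hrest
    exact ⟨p, Finset.mem_inter.2 ⟨hPIa.2, Finset.mem_insert_self _ _⟩⟩

lemma Cl_eq (hN : 2 ≤ N) (hC : ¬ SumDec π ∧ ¬ SkewDec π) {p q : Fin N}
    (h : q ∈ Cl π p) : Cl π q = Cl π p := by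
  have hU : PI π (Cl π p ∪ Cl π q) :=
    proper_union hN hC (Cl_PI hN hC p) (Cl_PI hN hC q)
      ⟨q, Finset.mem_inter.2 ⟨h, mem_Cl_self q⟩⟩
  have h1 : Cl π p ∪ Cl π q ⊆ Cl π p :=
    Cl_max hU (Finset.mem_union_left _ (mem_Cl_self p))
  have h2 : Cl π p ∪ Cl π q ⊆ Cl π q :=
    Cl_max hU (Finset.mem_union_right _ (mem_Cl_self q))
  apply Finset.Subset.antisymm
  · exact fun x hx => h1 (Finset.mem_union_right _ hx)
  · exact fun x hx => h2 (Finset.mem_union_left _ hx)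

end Classes

lemma nondec_exists (π : Perm N) (hN : 2 ≤ N) (hC : ¬ SumDec π ∧ ¬ SkewDec π) :
    ∃ (mm : ℕ) (σ : Perm mm) (k : Fin mm → ℕ) (α : ∀ i, Perm (k i)),
      2 ≤ mm ∧ IsSimple σ ∧ IsInflation σ α π := by
  classical
  set M : Finset (Fin N) := univ.filter (fun p => ∀ q ∈ Cl π p, p ≤ q) with hMdef
  have hMspec : ∀ p ∈ M, ∀ q ∈ Cl π p, p ≤ q := by
    intro p hp
    rw [hMdef, Finset.mem_filter] at hp
    exact hp.2
  have hμCl : ∀ p : Fin N, Cl π ((Cl π p).min' ⟨p, mem_Cl_self p⟩) = Cl π p :=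
    fun p => Cl_eq hN hC (Finset.min'_mem _ _)
  have hμM : ∀ p : Fin N, (Cl π p).min' ⟨p, mem_Cl_self p⟩ ∈ M := by
    intro p
    rw [hMdef, Finset.mem_filter]
    refine ⟨mem_univ _, ?_⟩
    intro q hq
    rw [hμCl p] at hq
    exact Finset.min'_le _ _ hq
  have hdisj : ∀ p q : Fin N, p ∈ M → q ∈ M → p ≠ q →
      ∀ r, r ∈ Cl π p → r ∈ Cl π q → False := by
    intro p q hp hq hpq r hrp hrq
    have h1 : Cl π r = Cl π p := Cl_eq hN hC hrp
    have h2 : Cl π r = Cl π q := Cl_eq hN hC hrq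
    have hqp : q ∈ Cl π p := by rw [← h1, h2]; exact mem_Cl_self q
    have hpq' : p ∈ Cl π q := by rw [← h2, h1]; exact mem_Cl_self p
    exact hpq (le_antisymm (hMspec p hp q hqp) (hMspec q hq p hpq'))
  set mm := M.card with hmm
  set e : Fin mm ≃o {x // x ∈ M} := M.orderIsoOfFin hmm.symm with hedef
  set ee : Fin mm → Fin N := fun i => ((e i : {x // x ∈ M}) : Fin N) with heedef
  have heeM : ∀ i, ee i ∈ M := fun i => (e i).2
  have heelt : ∀ i j : Fin mm, ee i < ee j ↔ i < j := by
    intro i j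
    constructor
    · intro h
      rw [← e.lt_iff_lt]
      exact Subtype.coe_lt_coe.1 h
    · intro h
      exact Subtype.coe_lt_coe.2 (e.lt_iff_lt.2 h)
  have heeinj : Function.Injective ee := by
    intro i j h
    exact e.injective (Subtype.ext h)
  set k : Fin mm → ℕ := fun i => (Cl π (ee i)).card with hkdef
  have hkpos : ∀ i, 0 < k i := fun i => Finset.card_pos.2 ⟨ee i, mem_Cl_self _⟩
  have hkltN : ∀ i, k i < N := fun i => (Cl_PI hN hC (ee i)).2
  have hClee : ∀ i, Cl π (ee i) = ico N ((ee i : Fin N):ℕ) (((ee i :Fin N):ℕ) + k i) := by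
    intro i
    have hne : (Cl π (ee i)).Nonempty := ⟨ee i, mem_Cl_self _⟩
    have h1 := range_rep (Cl_PI hN hC (ee i)).1.1 hne
    have hmineq : (Cl π (ee i)).min' hne = ee i :=
      le_antisymm (Finset.min'_le _ _ (mem_Cl_self _))
        (Finset.le_min' _ _ _ (hMspec _ (heeM i)))
    rw [hmineq] at h1
    exact h1
  have hprefix : ∀ i : Fin mm, ico N 0 ((ee i :Fin N):ℕ) =
      (univ.filter (fun t : Fin mm => (t:ℕ) < (i:ℕ))).biUnion (fun t => Cl π (ee t)) := by
    intro i
    ext q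
    rw [mem_ico, Finset.mem_biUnion]
    constructor
    · rintro ⟨-, hq⟩
      set w := (Cl π q).min' ⟨q, mem_Cl_self q⟩ with hwdef
      have hwM : w ∈ M := hμM q
      have hwq : q ∈ Cl π w := by rw [hμCl q]; exact mem_Cl_self q
      set t : Fin mm := e.symm ⟨w, hwM⟩ with htdef
      have het : ee t = w := congrArg Subtype.val (e.apply_symm_apply ⟨w, hwM⟩)
      refine ⟨t, ?_, by rw [het]; exact hwq⟩
      rw [Finset.mem_filter]
      refine ⟨mem_univ _, ?_⟩
      have hwle : (w : ℕ) ≤ (q : ℕ) := Fin.le_def.1 (Finset.min'_le _ _ (mem_Cl_self q))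
      have hlt : ee t < ee i := by
        rw [Fin.lt_def, het]
        omega
      exact Fin.lt_def.1 ((heelt t i).1 hlt)
    · rintro ⟨t, ht, hq⟩
      rw [Finset.mem_filter] at ht
      refine ⟨Nat.zero_le _, ?_⟩
      by_contra hcon
      push_neg at hcon
      have htlt : t < i := Fin.lt_def.2 ht.2
      have htne : t ≠ i := ne_of_lt htlt
      have h1 : ee t ≤ ee i := le_of_lt ((heelt t i).2 htlt)
      have heiCl : ee i ∈ Cl π (ee t) :=
        (Cl_PI hN hC (ee t)).1.1 (mem_Cl_self (ee t)) hq h1 (Fin.le_def.2 hcon)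
      exact hdisj (ee t) (ee i) (heeM t) (heeM i) (fun h => htne (heeinj h))
        (ee i) heiCl (mem_Cl_self _)
  have hbdisj : ∀ (a : Fin mm), a ∈ (univ : Finset (Fin mm)) → ∀ (b : Fin mm), b ∈ univ →
      a ≠ b → Disjoint (Cl π (ee a)) (Cl π (ee b)) := by
    intro a _ b _ hab
    rw [Finset.disjoint_left]
    intro r hra hrb
    exact hdisj (ee a) (ee b) (heeM a) (heeM b) (fun h => hab (heeinj h)) r hra hrb
  have hS_ee : ∀ i : Fin mm, S k ((i : Fin mm):ℕ) = ((ee i : Fin N):ℕ) := by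
    intro i
    have h1 : (ico N 0 ((ee i :Fin N):ℕ)).card = ((ee i:Fin N):ℕ) := by
      rw [card_ico_gen]
      have := (ee i).isLt
      omega
    rw [← h1, hprefix i, Finset.card_biUnion]
    · exact (Finset.sum_congr rfl (fun t _ => rfl)).symm
    · intro a ha b hb hab
      exact hbdisj a (mem_univ a) b (mem_univ b) hab
  have htot : ∑ t, k t = N := by
    have huniv : (univ : Finset (Fin mm)).biUnion (fun t => Cl π (ee t)) = univ := by
      apply Finset.eq_univ_of_forall
      intro q
      rw [Finset.mem_biUnion]
      set w := (Cl π q).min' ⟨q, mem_Cl_self q⟩ with hwdef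
      have hwM : w ∈ M := hμM q
      have hwq : q ∈ Cl π w := by rw [hμCl q]; exact mem_Cl_self q
      set t : Fin mm := e.symm ⟨w, hwM⟩ with htdef
      have het : ee t = w := congrArg Subtype.val (e.apply_symm_apply ⟨w, hwM⟩)
      exact ⟨t, mem_univ _, by rw [het]; exact hwq⟩
    have h1 : ((univ : Finset (Fin mm)).biUnion (fun t => Cl π (ee t))).card = N := by
      rw [huniv, Finset.card_univ, Fintype.card_fin]
    rw [Finset.card_biUnion hbdisj] at h1
    exact h1
  have hblocks : ∀ i : Fin mm, B N k i = Cl π (ee i) := by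
    intro i
    rw [B, hS_ee i, ← hClee i]
  have hint : ∀ i, IsPermInterval π (B N k i) := by
    intro i
    rw [hblocks]
    exact (Cl_PI hN hC (ee i)).1
  obtain ⟨σ, α, hα⟩ := construct hkpos htot hint
  refine ⟨mm, σ, k, α, ?_, ?_, hα⟩
  · -- 2 ≤ mm
    by_contra hcon
    push_neg at hcon
    have hsum_le : ∑ t, k t ≤ (univ : Finset (Fin mm)).card • (N - 1) := by
      apply Finset.sum_le_card_nsmul
      intro x _
      have := hkltN x
      omega
    rw [Finset.card_univ, Fintype.card_fin, smul_eq_mul] at hsum_le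
    rw [htot] at hsum_le
    have : mm * (N - 1) ≤ 1 * (N - 1) := Nat.mul_le_mul_right _ (by omega)
    omega
  · -- simple
    intro T hT
    by_contra hcontra
    push_neg at hcontra
    obtain ⟨hc1, hc2⟩ := hcontra
    have hTle : T.card ≤ mm := by
      have := Finset.card_le_univ T
      rwa [Fintype.card_fin] at this
    obtain ⟨i, hiT, j, hjT, hij⟩ := Finset.one_lt_card.1 hc1
    have hU := union_blocks_interval hα hT
    have hUsub : T.biUnion (B N k) ⊆ Cl π (ee i) := by
      apply Cl_max
      · refine ⟨hU, ?_⟩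
        rw [card_union_blocks hα]
        have hsl : ∑ t ∈ T, k t < ∑ t, k t := by
          obtain ⟨t0, ht0⟩ : ∃ t0 : Fin mm, t0 ∉ T := by
            by_contra hall
            push_neg at hall
            have : T = univ := Finset.eq_univ_of_forall hall
            rw [this, Finset.card_univ, Fintype.card_fin] at hc2
            exact hc2 rfl
          exact Finset.sum_lt_sum_of_subset (Finset.subset_univ T) (mem_univ t0) ht0
            (hkpos t0) (fun _ _ _ => Nat.zero_le _)
        omega
      · exact Finset.mem_biUnion.2 ⟨i, hiT, by rw [hblocks]; exact mem_Cl_self _⟩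
    obtain ⟨q, hq⟩ := B_nonempty hα j
    have hq1 : q ∈ Cl π (ee j) := by rw [← hblocks]; exact hq
    have hq2 : q ∈ Cl π (ee i) := hUsub (Finset.mem_biUnion.2 ⟨j, hjT, hq⟩)
    exact hdisj (ee j) (ee i) (heeM j) (heeM i) (fun h => hij ((heeinj h).symm)) q hq1 hq2

section Unique
variable {N : ℕ} {π : Perm N}

set_option linter.deprecated false in
lemma fin_mono_id {a : ℕ} {g : Fin a → Fin a} (hg : StrictMono g)
    (hsurj : Function.Surjective g) (i : Fin a) : g i = i := by
  have h : g = id := (hg.range_inj strictMono_id).1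
    (by rw [Set.range_id, Set.range_eq_univ.2 hsurj])
  rw [h]
  rfl

lemma not_two_vs_three {m m' : ℕ} {σ : Perm m} {σ' : Perm m'} {k : Fin m → ℕ}
    {k' : Fin m' → ℕ} {α : ∀ i, Perm (k i)} {α' : ∀ i, Perm (k' i)}
    (hα : IsInflation σ α π) (hβ : IsInflation σ' α' π)
    (hm : m = 2) (hm' : 3 ≤ m') (hs' : IsSimple σ') : False := by
  subst hm
  have hprop : ∀ i : Fin 2, (B N k i).card < N := by
    intro i
    rw [B_card hα]
    exact k_lt_N hα (by omega) i
  have hj : ∀ i : Fin 2, ∃ j : Fin m', B N k i ⊆ B N k' j := by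
    intro i
    exact inside_block hβ hs' hm' (B_interval hα i) (hprop i)
  obtain ⟨j0, hj0⟩ := hj 0
  obtain ⟨j1, hj1⟩ := hj 1
  have hcard2 : ({j0, j1} : Finset (Fin m')).card ≤ 2 := by
    apply le_trans (Finset.card_insert_le _ _)
    rw [Finset.card_singleton]
  have hsd : ((univ : Finset (Fin m')) \ {j0, j1}).Nonempty := by
    rw [← Finset.card_pos, Finset.card_sdiff_of_subset (Finset.subset_univ _), Finset.card_univ,
      Fintype.card_fin]
    omega
  obtain ⟨j2, hj2⟩ := hsd
  rw [Finset.mem_sdiff, Finset.mem_insert, Finset.mem_singleton] at hj2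
  push_neg at hj2
  obtain ⟨q, hq⟩ := B_nonempty hβ j2
  have hcover : q ∈ B N k (0 : Fin 2) ∨ q ∈ B N k (1 : Fin 2) := by
    set i := idx k (tot hα) q with hidef
    have hqB : q ∈ B N k i := (mem_B_iff hα).2 rfl
    have hival : (i : ℕ) < 2 := i.isLt
    rcases Nat.lt_or_ge (i:ℕ) 1 with h | h
    · left
      have hi0 : i = 0 := Fin.ext (show (i:ℕ) = ((0 : Fin 2):ℕ) by omega)
      rw [← hi0]
      exact hqB
    · right
      have hi1 : i = 1 := Fin.ext (show (i:ℕ) = ((1 : Fin 2):ℕ) by omega)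
      rw [← hi1]
      exact hqB
  have : j2 = j0 ∨ j2 = j1 := by
    rcases hcover with h | h
    · left
      exact ((mem_B_iff hβ).1 hq).symm.trans ((mem_B_iff hβ).1 (hj0 h))
    · right
      exact ((mem_B_iff hβ).1 hq).symm.trans ((mem_B_iff hβ).1 (hj1 h))
  rcases this with h | h
  · exact hj2.2.1 h
  · exact hj2.2.2 h

lemma two_block_orient {k : Fin 2 → ℕ} {σ : Perm 2} {α : ∀ i : Fin 2, Perm (k i)}
    (hα : IsInflation σ α π) (hN : 0 < N) :
    (σ 0 < σ 1 ↔ (π ⟨0, hN⟩ : ℕ) < (π ⟨N - 1, by omega⟩ : ℕ)) := by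
  have hk0 := hα.1 0
  have hk1 := hα.1 1
  have hNk : N = k 0 + k 1 := by
    have := hα.2.1
    rwa [Fin.sum_univ_two] at this
  have hS0 : S k ((0 : Fin 2) : ℕ) = 0 := S_zero k
  have hS1 : S k ((1 : Fin 2) : ℕ) = k 0 := by
    show S k 1 = k 0
    rw [S_succ k (by omega : 0 < 2), S_zero]
    have : (⟨0, by omega⟩ : Fin 2) = 0 := rfl
    rw [this, Nat.zero_add]
  set p0 : Fin N := ⟨0, hN⟩ with hp0def
  set pl : Fin N := ⟨N - 1, by omega⟩ with hpldef
  have hp0v : (p0 : ℕ) = 0 := rfl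
  have hplv : (pl : ℕ) = N - 1 := rfl
  have hidx0 : idx k (tot hα) p0 = 0 := idx_eq k (tot hα) (by omega) (by omega)
  have hidx1 : idx k (tot hα) pl = 1 := idx_eq k (tot hα) (by omega) (by omega)
  have hb0 := pi_bounds hα p0
  rw [hidx0] at hb0
  have hbl := pi_bounds hα pl
  rw [hidx1] at hbl
  have hne : σ 0 ≠ σ 1 := fun h => absurd (σ.injective h) (by decide)
  constructor
  · intro h
    have hW0 : W k σ 0 = 0 := by
      unfold W
      rw [Finset.sum_filter, Fin.sum_univ_two, if_neg (lt_irrefl _),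
        if_neg (not_lt.2 (le_of_lt h))]
      omega
    have hW1 : W k σ 1 = k 0 := by
      unfold W
      rw [Finset.sum_filter, Fin.sum_univ_two, if_pos h, if_neg (lt_irrefl _)]
      omega
    omega
  · intro h
    rcases lt_trichotomy (σ 0) (σ 1) with h' | h' | h'
    · exact h'
    · exact absurd h' hne
    · exfalso
      have hW1 : W k σ 1 = 0 := by
        unfold W
        rw [Finset.sum_filter, Fin.sum_univ_two, if_neg (not_lt.2 (le_of_lt h')),
          if_neg (lt_irrefl _)]
        omega
      have hW0 : W k σ 0 = k 1 := by
        unfold W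
        rw [Finset.sum_filter, Fin.sum_univ_two, if_neg (lt_irrefl _), if_pos h']
        omega
      omega

lemma perm2_eq (σ σ' : Perm 2) (h : (σ 0 < σ 1) ↔ (σ' 0 < σ' 1)) : σ = σ' := by
  have h1 : σ 0 ≠ σ 1 := fun hh => absurd (σ.injective hh) (by decide)
  have h1' : σ' 0 ≠ σ' 1 := fun hh => absurd (σ'.injective hh) (by decide)
  rw [Fin.lt_def, Fin.lt_def] at h
  rw [← Fin.val_ne_iff] at h1 h1'
  have ha := (σ 0).isLt
  have hb := (σ 1).isLt
  have ha' := (σ' 0).isLt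
  have hb' := (σ' 1).isLt
  apply Equiv.ext
  intro i
  fin_cases i
  · show σ 0 = σ' 0
    apply Fin.ext
    omega
  · show σ 1 = σ' 1
    apply Fin.ext
    omega

lemma three_three {m m' : ℕ} {σ : Perm m} {σ' : Perm m'} {k : Fin m → ℕ} {k' : Fin m' → ℕ}
    {α : ∀ i, Perm (k i)} {α' : ∀ i, Perm (k' i)}
    (hα : IsInflation σ α π) (hβ : IsInflation σ' α' π)
    (hm : 3 ≤ m) (hm' : 3 ≤ m') (hs : IsSimple σ) (hs' : IsSimple σ') :
    m = m' ∧ HEq σ σ' := by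
  have hg : ∀ i : Fin m, ∃ j, B N k i ⊆ B N k' j := fun i =>
    inside_block hβ hs' hm' (B_interval hα i)
      (by rw [B_card hα]; exact k_lt_N hα (by omega) i)
  have hf : ∀ j : Fin m', ∃ i, B N k' j ⊆ B N k i := fun j =>
    inside_block hα hs hm (B_interval hβ j)
      (by rw [B_card hβ]; exact k_lt_N hβ (by omega) j)
  choose g hgs using hg
  choose f hfs using hf
  have hfg : ∀ i, f (g i) = i := by
    intro i
    obtain ⟨q, hq⟩ := B_nonempty hα i
    have h2 : q ∈ B N k (f (g i)) := hfs (g i) (hgs i hq)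
    exact ((mem_B_iff hα).1 h2).symm.trans ((mem_B_iff hα).1 hq)
  have hgf : ∀ j, g (f j) = j := by
    intro j
    obtain ⟨q, hq⟩ := B_nonempty hβ j
    have h2 : q ∈ B N k' (g (f j)) := hgs (f j) (hfs j hq)
    exact ((mem_B_iff hβ).1 h2).symm.trans ((mem_B_iff hβ).1 hq)
  have hmeq : m = m' := by
    have := Fintype.card_congr (⟨g, f, hfg, hgf⟩ : Fin m ≃ Fin m')
    simpa using this
  subst hmeq
  refine ⟨rfl, heq_of_eq ?_⟩
  have hBeq : ∀ i, B N k i = B N k' (g i) := by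
    intro i
    apply Finset.Subset.antisymm (hgs i)
    have := hfs (g i)
    rwa [hfg i] at this
  have hgmono : StrictMono g := by
    intro i i' hii
    obtain ⟨q, hq⟩ := B_nonempty hα i
    obtain ⟨r, hr⟩ := B_nonempty hα i'
    have hq' : q ∈ B N k' (g i) := hgs i hq
    have hr' : r ∈ B N k' (g i') := hgs i' hr
    rcases lt_trichotomy (g i) (g i') with h | h | h
    · exact h
    · exfalso
      have hrB : r ∈ B N k i := by rw [hBeq i, h, ← hBeq i']; exact hr
      have := ((mem_B_iff hα).1 hrB).symm.trans ((mem_B_iff hα).1 hr)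
      exact (ne_of_lt hii) this
    · exfalso
      rw [B, mem_ico] at hq hr hq' hr'
      have hs1 : S k ((i:ℕ)+1) ≤ S k ((i':ℕ)) := S_mono k (Fin.lt_def.1 hii)
      rw [S_succ k i.isLt, Fin.eta] at hs1
      have hs2 : S k' (((g i'):ℕ)+1) ≤ S k' ((g i):ℕ) := S_mono k' (Fin.lt_def.1 h)
      rw [S_succ k' (g i').isLt, Fin.eta] at hs2
      omega
  have hgsurj : Function.Surjective g := fun j => ⟨f j, hgf j⟩
  have hgid : ∀ i, g i = i := fin_mono_id hgmono hgsurj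
  have hBeq' : ∀ i, B N k i = B N k' i := fun i => by rw [hBeq i, hgid i]
  have hW : ∀ i, W k σ i = W k' σ' i := by
    intro i
    have h1 := pi_block hα i
    have h2 := pi_block hβ i
    rw [← hBeq' i] at h2
    have h3 : ico N (W k σ i) (W k σ i + k i) = ico N (W k' σ' i) (W k' σ' i + k' i) :=
      h1.symm.trans h2
    have hki := hα.1 i
    have hki' := hβ.1 i
    have hWle := W_add_le hα i
    have hWle' := W_add_le hβ i
    have hmem1 : (⟨W k σ i, by omega⟩ : Fin N) ∈ ico N (W k σ i) (W k σ i + k i) := by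
      rw [mem_ico]
      show W k σ i ≤ W k σ i ∧ W k σ i < W k σ i + k i
      omega
    have hmem2 : (⟨W k' σ' i, by omega⟩ : Fin N) ∈ ico N (W k' σ' i) (W k' σ' i + k' i) := by
      rw [mem_ico]
      show W k' σ' i ≤ W k' σ' i ∧ W k' σ' i < W k' σ' i + k' i
      omega
    rw [h3, mem_ico] at hmem1
    rw [← h3, mem_ico] at hmem2
    have e1 : ((⟨W k σ i, by omega⟩ : Fin N) : ℕ) = W k σ i := rfl
    have e2 : ((⟨W k' σ' i, by omega⟩ : Fin N) : ℕ) = W k' σ' i := rfl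
    omega
  have hiff : ∀ i j, σ i < σ j ↔ σ' i < σ' j := by
    intro i j
    rw [W_lt_iff hα.1, W_lt_iff hβ.1, hW i, hW j]
  have hφmono : StrictMono (fun x => σ' (σ.symm x)) := by
    intro x y hxy
    show σ' (σ.symm x) < σ' (σ.symm y)
    apply (hiff _ _).1
    rwa [σ.apply_symm_apply, σ.apply_symm_apply]
  have hφsurj : Function.Surjective (fun x => σ' (σ.symm x)) :=
    fun z => ⟨σ (σ'.symm z), by simp⟩
  have hφid := fin_mono_id hφmono hφsurj
  apply Equiv.ext
  intro i
  have h4 := hφid (σ i)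
  simp only [σ.symm_apply_apply] at h4
  exact h4.symm

lemma unique_simple {m m' : ℕ} {σ : Perm m} {σ' : Perm m'} {k : Fin m → ℕ} {k' : Fin m' → ℕ}
    {α : ∀ i, Perm (k i)} {α' : ∀ i, Perm (k' i)} (hN : 2 ≤ N)
    (hm : 2 ≤ m) (hm' : 2 ≤ m') (hs : IsSimple σ) (hs' : IsSimple σ')
    (hα : IsInflation σ α π) (hβ : IsInflation σ' α' π) : m = m' ∧ HEq σ σ' := by
  rcases Nat.lt_or_ge m 3 with h2 | h3
  · have hm2 : m = 2 := by omega
    rcases Nat.lt_or_ge m' 3 with h2' | h3'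
    · have hm2' : m' = 2 := by omega
      subst hm2
      subst hm2'
      refine ⟨rfl, heq_of_eq ?_⟩
      have hNpos : 0 < N := by omega
      have o1 := two_block_orient hα hNpos
      have o2 := two_block_orient hβ hNpos
      exact perm2_eq σ σ' (o1.trans o2.symm)
    · exact (not_two_vs_three hα hβ hm2 h3' hs').elim
  · rcases Nat.lt_or_ge m' 3 with h2' | h3'
    · exact (not_two_vs_three hβ hα (by omega) h3 hs).elim
    · exact three_three hα hβ h3 h3' hs hs'

lemma exists_simple (π : Perm N) (hN : 2 ≤ N) :
    ∃ (mm : ℕ) (σ : Perm mm) (k : Fin mm → ℕ) (α : ∀ i, Perm (k i)),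
      2 ≤ mm ∧ IsSimple σ ∧ IsInflation σ α π := by
  by_cases h1 : SumDec π
  · exact sumdec_exists π h1
  by_cases h2 : SkewDec π
  · exact skewdec_exists π h2
  exact nondec_exists π hN ⟨h1, h2⟩

end Unique

end S8


/-- Every permutation of length at least `2` is the inflation of a simple permutation of
length at least `2`, and the simple permutation is unique. -/
theorem statement8 (N : ℕ) (π : Perm N) (hN : 2 ≤ N) :
    (∃ (m : ℕ) (σ : Perm m) (k : Fin m → ℕ) (α : ∀ i, Perm (k i)),
      2 ≤ m ∧ IsSimple σ ∧ IsInflation σ α π) ∧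
    (∀ (m m' : ℕ) (σ : Perm m) (σ' : Perm m')
      (k : Fin m → ℕ) (k' : Fin m' → ℕ) (α : ∀ i, Perm (k i)) (α' : ∀ i, Perm (k' i)),
      2 ≤ m → 2 ≤ m' → IsSimple σ → IsSimple σ' →
      IsInflation σ α π → IsInflation σ' α' π → m = m' ∧ HEq σ σ') := by
  constructor
  · exact S8.exists_simple π hN
  · intro m m' σ σ' k k' α α' hm hm' hs hs' hα hβ
    exact S8.unique_simple hN hm hm' hs hs' hα hβ
end

section
/- Let σ be a simple permutation of length m ≥ 4. If σ[α₁,…,α_m] = σ[α₁',…,α_m'] for nonempty permutations α₁,…,α_m, α₁',…,α_m', then α_i = α_i' for all 1 ≤ i ≤ m. -/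
open Finset

section Blocks

variable {m N : ℕ} {k : Fin m → ℕ} {i j j₁ j₂ : Fin m}

def blockStart (k : Fin m → ℕ) (i : Fin m) : ℕ :=
  ∑ t ∈ univ.filter (· < i), k t

def block (k : Fin m → ℕ) (i : Fin m) : Finset (Fin N) :=
  univ.filter fun p => blockStart k i ≤ p ∧ (p : ℕ) < blockStart k i + k i

def blocksMeeting (k : Fin m → ℕ) (S : Finset (Fin N)) : Finset (Fin m) :=
  univ.filter fun j => ∃ p ∈ S, p ∈ block k j

@[simp]
theorem mem_block {p : Fin N} :
    p ∈ block k i ↔ blockStart k i ≤ p ∧ (p : ℕ) < blockStart k i + k i := by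
  simp [block]

@[simp]
theorem mem_blocksMeeting {S : Finset (Fin N)} :
    j ∈ blocksMeeting k S ↔ ∃ p ∈ S, p ∈ block k j := by
  simp [blocksMeeting]

theorem blockStart_eq_sum_castLE (k : Fin m → ℕ) (i : Fin m) :
    blockStart k i = ∑ t : Fin i, k (Fin.castLE i.2.le t) := by
  have hmap : univ.map (Fin.castLEEmb i.2.le) = univ.filter (· < i) := by
    ext t
    simp only [mem_map, mem_univ, true_and, mem_filter, Fin.lt_def]
    exact ⟨fun ⟨s, hs⟩ => hs ▸ s.2, fun ht => ⟨⟨t, ht⟩, rfl⟩⟩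
  rw [blockStart, ← hmap, sum_map]
  rfl

theorem blockStart_add_le_of_lt (h : i < j) : blockStart k i + k i ≤ blockStart k j := by
  rw [blockStart, blockStart, add_comm, ← sum_insert (by simp)]
  refine sum_le_sum_of_subset (insert_subset_iff.2 ⟨by simpa, fun t ht => ?_⟩)
  simp only [mem_filter, mem_univ, true_and] at ht ⊢
  exact ht.trans h

theorem blockStart_add_le_sum (i : Fin m) : blockStart k i + k i ≤ ∑ t, k t := by
  rw [blockStart, add_comm, ← sum_insert (by simp)]
  exact sum_le_sum_of_subset (subset_univ _)

theorem eq_of_mem_block {p : Fin N} (hi : p ∈ block k i) (hj : p ∈ block k j) : i = j := by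
  rw [mem_block] at hi hj
  rcases lt_trichotomy i j with h | h | h
  · have := blockStart_add_le_of_lt (k := k) h
    omega
  · exact h
  · have := blockStart_add_le_of_lt (k := k) h
    omega

theorem exists_mem_block (hN : N = ∑ t, k t) (p : Fin N) : ∃ i, p ∈ block k i := by
  obtain ⟨⟨i, j⟩, hij⟩ := finSigmaFinEquiv.surjective (Fin.cast hN p)
  have hp := congrArg Fin.val hij
  rw [finSigmaFinEquiv_apply, Fin.val_cast] at hp
  dsimp only at hp
  rw [← blockStart_eq_sum_castLE] at hp
  exact ⟨i, mem_block.2 ⟨by omega, by omega⟩⟩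

theorem nonempty_block (hN : N = ∑ t, k t) (hk : 0 < k i) :
    (block k i : Finset (Fin N)).Nonempty :=
  ⟨⟨blockStart k i, by have := blockStart_add_le_sum (k := k) i; omega⟩, by simpa using hk⟩

theorem block_ne_univ (hm : 2 ≤ m) (hk : ∀ i, 0 < k i) (hN : N = ∑ t, k t) (i : Fin m) :
    block k i ≠ (univ : Finset (Fin N)) := by
  have := Fin.nontrivial_iff_two_le.2 hm
  obtain ⟨i₂, hi₂⟩ := exists_ne i
  obtain ⟨p, hp⟩ := nonempty_block hN (hk i₂)
  exact fun hi => hi₂ (eq_of_mem_block hp (hi ▸ mem_univ p))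

theorem isRange_block : IsRange (block k i : Finset (Fin N)) := by
  intro a b c ha hc hab hbc
  rw [mem_block] at ha hc ⊢
  rw [Fin.le_def] at hab hbc
  omega

theorem block_subset_of_lt_of_lt {S : Finset (Fin N)} {a c : Fin N} (hS : IsRange S)
    (ha : a ∈ S) (ha' : a ∈ block k j₁) (hc : c ∈ S) (hc' : c ∈ block k j₂)
    (h₁ : j₁ < j) (h₂ : j < j₂) : block k j ⊆ S := by
  intro p hp
  rw [mem_block] at ha' hc' hp
  have := blockStart_add_le_of_lt (k := k) h₁
  have := blockStart_add_le_of_lt (k := k) h₂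
  exact hS ha hc (Fin.le_def.2 (by omega)) (Fin.le_def.2 (by omega))

theorem isRange_blocksMeeting (hk : ∀ i, 0 < k i) (hN : N = ∑ t, k t) {S : Finset (Fin N)}
    (hS : IsRange S) : IsRange (blocksMeeting k S) := by
  intro j₁ j j₂ hj₁ hj₂ h₁ h₂
  rcases h₁.eq_or_lt with rfl | h₁
  · exact hj₁
  rcases h₂.eq_or_lt with rfl | h₂
  · exact hj₂
  obtain ⟨a, ha, ha'⟩ := mem_blocksMeeting.1 hj₁
  obtain ⟨c, hc, hc'⟩ := mem_blocksMeeting.1 hj₂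
  obtain ⟨p, hp⟩ := nonempty_block hN (hk j)
  exact mem_blocksMeeting.2 ⟨p, block_subset_of_lt_of_lt hS ha ha' hc hc' h₁ h₂ hp, hp⟩

theorem block_subset_of_blocksMeeting_eq_univ {S : Finset (Fin N)} (hS : IsRange S)
    (hT : blocksMeeting k S = univ) (hj : ¬IsMin j ∧ ¬IsMax j) : block k j ⊆ S := by
  obtain ⟨j₁, h₁⟩ := not_isMin_iff.1 hj.1
  obtain ⟨j₂, h₂⟩ := not_isMax_iff.1 hj.2
  obtain ⟨a, ha, ha'⟩ := mem_blocksMeeting.1 (hT ▸ mem_univ j₁)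
  obtain ⟨c, hc, hc'⟩ := mem_blocksMeeting.1 (hT ▸ mem_univ j₂)
  exact block_subset_of_lt_of_lt hS ha ha' hc hc' h₁ h₂

end Blocks

theorem isRange_erase {n : ℕ} {q : Fin n} (hq : IsMin q ∨ IsMax q) :
    IsRange (univ.erase q) := by
  intro i j l hi hl hij hjl
  simp only [mem_erase, mem_univ, and_true] at hi hl ⊢
  rintro rfl
  rcases hq with hq | hq
  · exact hi (le_antisymm hij (hq hij))
  · exact hl (le_antisymm (hq hjl) hjl)

theorem IsSimple.not_isMin_and_not_isMax {m : ℕ} {σ : Perm m} (hσ : IsSimple σ) (hm : 3 ≤ m)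
    {j : Fin m} (hj : IsMin j ∨ IsMax j) : ¬IsMin (σ j) ∧ ¬IsMax (σ j) := by
  rw [← not_or]
  intro hσj
  have himage : (univ.erase j).image σ = univ.erase (σ j) := by
    rw [image_erase σ.injective, image_univ_equiv]
  rcases hσ _ ⟨isRange_erase hj, himage ▸ isRange_erase hσj⟩ with h | h <;>
    simp only [card_erase_of_mem (mem_univ _), card_univ, Fintype.card_fin] at h <;> omega

theorem sum_filter_apply_lt_eq_blockStart {m : ℕ} (σ : Perm m) (k : Fin m → ℕ) (i : Fin m) :
    ∑ t ∈ univ.filter (fun t => σ t < σ i), k t =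
      blockStart (fun s => k (σ.symm s)) (σ i) :=
  sum_equiv σ (by simp) (by simp)

namespace IsInflation

variable {N m : ℕ} {k k' : Fin m → ℕ} {σ : Perm m} {α : ∀ i, Perm (k i)}
  {α' : ∀ i, Perm (k' i)} {π : Perm N}

theorem sum_comp_symm (h : IsInflation σ α π) : N = ∑ s, k (σ.symm s) :=
  h.2.1.trans (Equiv.sum_comp σ.symm k).symm

theorem apply_mem_block (h : IsInflation σ α π) {i : Fin m} {p : Fin N} (hp : p ∈ block k i) :
    π p ∈ block (fun s => k (σ.symm s)) (σ i) := by
  rw [mem_block] at hp ⊢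
  have hπp := h.2.2 i ⟨p - blockStart k i, by omega⟩ p (Nat.add_sub_of_le hp.1).symm
  rw [sum_filter_apply_lt_eq_blockStart] at hπp
  have := (α i ⟨p - blockStart k i, by omega⟩).isLt
  simp only [Equiv.symm_apply_apply]
  omega

theorem apply_mem_block_iff (h : IsInflation σ α π) {i : Fin m} {p : Fin N} :
    π p ∈ block (fun s => k (σ.symm s)) (σ i) ↔ p ∈ block k i := by
  refine ⟨fun hp => ?_, h.apply_mem_block⟩
  obtain ⟨j, hj⟩ := exists_mem_block h.2.1 p
  rwa [σ.injective (eq_of_mem_block (h.apply_mem_block hj) hp)] at hj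

theorem isPermInterval_block (h : IsInflation σ α π) (i : Fin m) :
    IsPermInterval π (block k i) := by
  refine ⟨isRange_block, ?_⟩
  have himage : (block k i).image π = block (fun s => k (σ.symm s)) (σ i) := by
    ext v
    obtain ⟨p, rfl⟩ := π.surjective v
    rw [π.injective.mem_finset_image, h.apply_mem_block_iff]
  exact himage ▸ isRange_block

theorem image_blocksMeeting (h : IsInflation σ α π) (I : Finset (Fin N)) :
    (blocksMeeting k I).image σ = blocksMeeting (fun s => k (σ.symm s)) (I.image π) := by
  ext s
  obtain ⟨j, rfl⟩ := σ.surjective s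
  simp only [σ.injective.mem_finset_image, mem_blocksMeeting, mem_image,
    exists_exists_and_eq_and, h.apply_mem_block_iff]

theorem eq_univ_of_blocksMeeting_eq_univ (hm : 3 ≤ m) (hσ : IsSimple σ)
    (h : IsInflation σ α π) {I : Finset (Fin N)} (hI : IsPermInterval π I)
    (hT : blocksMeeting k I = univ) : I = univ := by
  have hTσ : blocksMeeting (fun s => k (σ.symm s)) (I.image π) = univ := by
    rw [← h.image_blocksMeeting, hT, image_univ_equiv]
  refine eq_univ_iff_forall.2 fun p => ?_
  obtain ⟨j, hj⟩ := exists_mem_block h.2.1 p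
  by_cases hext : IsMin j ∨ IsMax j
  · obtain ⟨q, hq, hqp⟩ := mem_image.1 <| block_subset_of_blocksMeeting_eq_univ hI.2 hTσ
      (hσ.not_isMin_and_not_isMax hm hext) (h.apply_mem_block hj)
    rwa [← π.injective hqp]
  · exact block_subset_of_blocksMeeting_eq_univ hI.1 hT (not_or.1 hext) hj

theorem eq_univ_of_mem_block_of_mem_block (hm : 3 ≤ m) (hσ : IsSimple σ)
    (h : IsInflation σ α π) {I : Finset (Fin N)} (hI : IsPermInterval π I) {p q : Fin N}
    {i j : Fin m} (hp : p ∈ I) (hq : q ∈ I) (hpi : p ∈ block k i) (hqj : q ∈ block k j)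
    (hij : i ≠ j) : I = univ := by
  have hT : IsRange (blocksMeeting k I) := isRange_blocksMeeting h.1 h.2.1 hI.1
  have hTσ : IsRange ((blocksMeeting k I).image σ) := by
    rw [h.image_blocksMeeting]
    exact isRange_blocksMeeting (fun s => h.1 _) h.sum_comp_symm hI.2
  refine h.eq_univ_of_blocksMeeting_eq_univ hm hσ hI ?_
  rcases hσ _ ⟨hT, hTσ⟩ with hle | hcard
  · have := one_lt_card.2 ⟨i, mem_blocksMeeting.2 ⟨p, hp, hpi⟩, j,
      mem_blocksMeeting.2 ⟨q, hq, hqj⟩, hij⟩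
    omega
  · exact eq_univ_of_card _ (by simpa using hcard)

theorem le_of_blockStart_eq (hm : 3 ≤ m) (hσ : IsSimple σ) (h : IsInflation σ α π)
    (h' : IsInflation σ α' π) {i : Fin m} (hs : blockStart k i = blockStart k' i) :
    k i ≤ k' i := by
  have hend := blockStart_add_le_sum (k := k) i
  have hki := h.1 i
  have hN := h.2.1
  let first : Fin N := ⟨blockStart k i, by omega⟩
  let last : Fin N := ⟨blockStart k i + k i - 1, by omega⟩
  have hfirst : first ∈ block k i := mem_block.2 ⟨le_rfl, Nat.lt_add_of_pos_right hki⟩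
  have hfirst' : first ∈ block k' i :=
    mem_block.2 ⟨hs.ge, hs ▸ Nat.lt_add_of_pos_right (h'.1 i)⟩
  have hlast : last ∈ block k i :=
    mem_block.2 ⟨Nat.le_sub_one_of_lt (by omega), Nat.sub_one_lt (by omega)⟩
  obtain ⟨j, hj⟩ := exists_mem_block h'.2.1 last
  obtain rfl : i = j := by
    by_contra hij
    exact block_ne_univ (by omega) h.1 h.2.1 i <| h'.eq_univ_of_mem_block_of_mem_block hm hσ
      (h.isPermInterval_block i) hfirst hlast hfirst' hj hij
  simp only [mem_block, last] at hj
  omega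

theorem lengths_eq (hm : 3 ≤ m) (hσ : IsSimple σ) (h : IsInflation σ α π)
    (h' : IsInflation σ α' π) : k = k' := by
  funext i
  induction i using WellFoundedLT.induction with
  | _ i ih =>
    have hs : blockStart k i = blockStart k' i :=
      sum_congr rfl fun t ht => ih t (by simpa using ht)
    exact le_antisymm (h.le_of_blockStart_eq hm hσ h' hs) (h'.le_of_blockStart_eq hm hσ h hs.symm)

theorem perms_eq {α₂ : ∀ i, Perm (k i)} (h : IsInflation σ α π)
    (h₂ : IsInflation σ α₂ π) :
    α = α₂ := by
  funext i
  ext j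
  have hend := blockStart_add_le_sum (k := k) i
  have hN := h.2.1
  have hp : blockStart k i + j < N := by omega
  have e := h.2.2 i j ⟨_, hp⟩ rfl
  have e₂ := h₂.2.2 i j ⟨_, hp⟩ rfl
  omega

end IsInflation

/-- If `σ` is a simple permutation of length `m ≥ 4`, then the blocks of an inflation
of `σ` are uniquely determined. -/
theorem statement9 (m : ℕ) (hm : 4 ≤ m) (σ : Perm m) (hσ : IsSimple σ)
    (k k' : Fin m → ℕ) (α : ∀ i, Perm (k i)) (α' : ∀ i, Perm (k' i))
    (N : ℕ) (π : Perm N) (h : IsInflation σ α π) (h' : IsInflation σ α' π) :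
    ∀ i : Fin m, k i = k' i ∧ HEq (α i) (α' i) := by
  obtain rfl := h.lengths_eq (by omega) hσ h'
  obtain rfl := h.perms_eq h'
  exact fun i => ⟨rfl, HEq.rfl⟩
end

section
/- The set of properties {EV, EL} is query-complete, where EV is the set of even permutations and EL is the set of permutations of even length. -/
/-- A set of properties (a property is a set of permutations) is query-complete:
whether an inflation `σ[α 0, …, α (m-1)]` satisfies a property `P` of the set depends
only on `σ` and on which properties of the set each block `α i` satisfies. -/
def QueryComplete (Ps : Set (∀ n, Set (Perm n))) : Prop :=
  ∀ ⦃m : ℕ⦄ (σ : Perm m) (k k' : Fin m → ℕ)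
    (α : ∀ i, Perm (k i)) (α' : ∀ i, Perm (k' i)),
    (∀ i : Fin m, ∀ Q ∈ Ps, α i ∈ Q (k i) ↔ α' i ∈ Q (k' i)) →
    ∀ P ∈ Ps, ∀ ⦃N N' : ℕ⦄ (π : Perm N) (π' : Perm N'),
      IsInflation σ α π → IsInflation σ α' π' → (π ∈ P N ↔ π' ∈ P N')

/-- The property of being an even permutation. -/
def EV : ∀ n, Set (Perm n) := fun _ => {π | Equiv.Perm.sign π = 1}

/-- The property of having even length. -/
def EL : ∀ n, Set (Perm n) := fun n => {_π | Even n}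

namespace InflAux




theorem sign_eq_signAux {n : ℕ} (f : Perm n) : Equiv.Perm.sign f = Equiv.Perm.signAux f := by
  induction f using Equiv.Perm.swap_induction_on
  case _ => simp [Equiv.Perm.signAux_one]
  case _ f x y hxy ih =>
    rw [map_mul, Equiv.Perm.signAux_mul, ih, Equiv.Perm.sign_swap hxy,
      Equiv.Perm.signAux_swap hxy]

variable {m : ℕ}

/-- offset of block `i` for weights `k` -/
def off (k : Fin m → ℕ) (i : Fin m) : ℕ := ∑ t ∈ Finset.univ.filter fun t => t < i, k t

variable {k : Fin m → ℕ}

theorem off_add_k (i : Fin m) :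
    off k i + k i = ∑ t ∈ Finset.univ.filter (fun t => t ≤ i), k t := by
  have h : Finset.univ.filter (fun t : Fin m => t ≤ i)
      = insert i (Finset.univ.filter fun t => t < i) := by
    ext t
    simp [le_iff_lt_or_eq, or_comm]
  rw [h, Finset.sum_insert (by simp)]
  unfold off
  omega

theorem off_add_k_le {i i' : Fin m} (h : i < i') : off k i + k i ≤ off k i' := by
  rw [off_add_k]
  apply Finset.sum_le_sum_of_subset
  intro t ht
  simp only [Finset.mem_filter, Finset.mem_univ, true_and] at *
  exact lt_of_le_of_lt ht h

theorem blocks_lt {i i' : Fin m} {a b : ℕ} (ha : a < k i) (h : i < i') :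
    off k i + a < off k i' + b := by
  have h1 := off_add_k_le (k := k) h
  omega

theorem dec_i_eq {i i' : Fin m} {a b : ℕ} (ha : a < k i) (hb : b < k i')
    (h : off k i + a = off k i' + b) : i = i' := by
  rcases lt_trichotomy i i' with h1 | h1 | h1
  · exact absurd h (blocks_lt ha h1).ne
  · exact h1
  · exact absurd h.symm (blocks_lt hb h1).ne

theorem lt_iff_of_ne {i i' : Fin m} {a b : ℕ} (ha : a < k i) (hb : b < k i') (hne : i ≠ i') :
    off k i + a < off k i' + b ↔ i < i' := by
  constructor
  · intro h
    rcases lt_trichotomy i i' with h1 | h1 | h1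
    · exact h1
    · exact absurd h1 hne
    · have h2 : off k i' + b < off k i + a := blocks_lt hb h1
      omega
  · exact blocks_lt ha

theorem off_add_lt {i : Fin m} {a : ℕ} (ha : a < k i) : off k i + a < ∑ t, k t := by
  have h1 : off k i + k i ≤ ∑ t, k t := by
    rw [off_add_k]
    exact Finset.sum_le_sum_of_subset (Finset.filter_subset _ _)
  omega

theorem dec_exists (hk : ∀ i, 0 < k i) {p : ℕ} (hp : p < ∑ t, k t) :
    ∃ i : Fin m, ∃ j : Fin (k i), p = off k i + (j : ℕ) := by
  have hm : 0 < m := by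
    rcases Nat.eq_zero_or_pos m with h | h
    · subst h; simp at hp
    · exact h
  set S := Finset.univ.filter (fun i : Fin m => off k i ≤ p) with hS
  have h0 : (⟨0, hm⟩ : Fin m) ∈ S := by
    have he : (Finset.univ.filter fun t : Fin m => t < ⟨0, hm⟩) = ∅ := by
      ext t
      simp [Fin.lt_def]
    rw [hS, Finset.mem_filter]
    refine ⟨Finset.mem_univ _, ?_⟩
    unfold off
    rw [he]
    simp
  have hSne : S.Nonempty := ⟨_, h0⟩
  set i := S.max' hSne with hi
  have hile : off k i ≤ p := by
    have := S.max'_mem hSne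
    simpa [hS] using this
  have hlt : p < off k i + k i := by
    by_contra hge
    push_neg at hge
    by_cases hsucc : (i : ℕ) + 1 < m
    · set i' : Fin m := ⟨(i : ℕ) + 1, hsucc⟩ with hi'
      have heq : off k i' = off k i + k i := by
        rw [off_add_k]
        apply Finset.sum_congr _ (fun _ _ => rfl)
        ext t
        simp only [Finset.mem_filter, Finset.mem_univ, true_and, Fin.lt_def, Fin.le_def, hi']
        omega
      have hmem : i' ∈ S := by
        simp only [hS, Finset.mem_filter, Finset.mem_univ, true_and]
        omega
      have hle := S.le_max' i' hmem
      rw [← hi] at hle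
      have : (i' : ℕ) ≤ (i : ℕ) := hle
      simp [hi'] at this
    · have hlast : ∀ t : Fin m, t ≤ i := by
        intro t
        have := t.isLt
        rw [Fin.le_def]
        omega
      have htot : off k i + k i = ∑ t, k t := by
        rw [off_add_k]
        apply Finset.sum_congr _ (fun _ _ => rfl)
        ext t
        simp [hlast t]
      omega
  exact ⟨i, ⟨p - off k i, by omega⟩, by simp only [Fin.val_mk]; omega⟩

theorem off_sigma (σ : Perm m) (i : Fin m) :
    (∑ t ∈ Finset.univ.filter fun t => σ t < σ i, k t) = off (k ∘ ⇑σ.symm) (σ i) := by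
  unfold off
  apply Finset.sum_equiv σ
  · intro t
    simp
  · intro t _
    simp



theorem signAux_inflation {N m : ℕ} {k : Fin m → ℕ} (σ : Perm m) (α : ∀ i, Perm (k i))
    (π : Perm N) (h : IsInflation σ α π) :
    Equiv.Perm.signAux π = (∏ i, Equiv.Perm.signAux (α i)) *
      ∏ x ∈ Equiv.Perm.finPairsLT m,
        (if σ x.1 ≤ σ x.2 then (-1 : ℤˣ) else 1) ^ (k x.1 * k x.2) := by
  classical
  obtain ⟨hk, hN, hπ⟩ := h
  subst hN
  set kσ : Fin m → ℕ := k ∘ ⇑σ.symm with hkσdef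
  have hkσ : ∀ i : Fin m, kσ (σ i) = k i := by
    intro i; simp [hkσdef]
  have hπ' : ∀ (i : Fin m) (j : Fin (k i)) (p : Fin (∑ t, k t)),
      (p : ℕ) = off k i + (j : ℕ) → (π p : ℕ) = off kσ (σ i) + (α i j : ℕ) := by
    intro i j p hp
    rw [← off_sigma σ i]
    exact hπ i j p hp
  set enc : (Σ i : Fin m, Fin (k i)) → Fin (∑ t, k t) :=
    fun y => ⟨off k y.1 + (y.2 : ℕ), off_add_lt y.2.isLt⟩ with henc
  have hπenc : ∀ (i : Fin m) (j : Fin (k i)),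
      (π (enc ⟨i, j⟩) : ℕ) = off kσ (σ i) + (α i j : ℕ) := fun i j => hπ' i j _ rfl
  -- step 1 : signAux π as a product over sigma pairs
  set S : Finset (Σ _ : (Σ i : Fin m, Fin (k i)), (Σ i : Fin m, Fin (k i))) :=
    Finset.univ.filter (fun y => enc y.2 < enc y.1) with hSdef
  have step1 : Equiv.Perm.signAux π =
      ∏ y ∈ S, (if π (enc y.1) ≤ π (enc y.2) then (-1 : ℤˣ) else 1) := by
    unfold Equiv.Perm.signAux
    refine (Finset.prod_nbij (fun y => (⟨enc y.1, enc y.2⟩ : Σ _ : Fin (∑ t, k t), Fin (∑ t, k t)))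
      ?_ ?_ ?_ ?_).symm
    · intro y hy
      rw [Equiv.Perm.mem_finPairsLT]
      simpa [hSdef] using hy
    · rintro ⟨⟨i, j⟩, ⟨i', j'⟩⟩ - ⟨⟨a, b⟩, ⟨a', b'⟩⟩ - hEq
      simp only [Sigma.mk.inj_iff] at hEq
      obtain ⟨h1, h2⟩ := hEq
      rw [heq_iff_eq] at h2
      have hv1 : off k i + (j : ℕ) = off k a + (b : ℕ) := congrArg Fin.val h1
      have hv2 : off k i' + (j' : ℕ) = off k a' + (b' : ℕ) := congrArg Fin.val h2
      have hia : i = a := dec_i_eq j.isLt b.isLt hv1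
      have hia' : i' = a' := dec_i_eq j'.isLt b'.isLt hv2
      subst hia; subst hia'
      have : (j : ℕ) = (b : ℕ) := by omega
      have h3 : j = b := Fin.val_injective this
      have : (j' : ℕ) = (b' : ℕ) := by omega
      have h4 : j' = b' := Fin.val_injective this
      subst h3; subst h4
      rfl
    · intro x hx
      rw [Finset.mem_coe, Equiv.Perm.mem_finPairsLT] at hx
      obtain ⟨i, j, hij⟩ := dec_exists hk x.1.isLt
      obtain ⟨i', j', hij'⟩ := dec_exists hk x.2.isLt
      refine ⟨⟨⟨i, j⟩, ⟨i', j'⟩⟩, ?_, ?_⟩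
      · simp only [Finset.mem_coe, hSdef, Finset.mem_filter, Finset.mem_univ, true_and]
        show (enc ⟨i', j'⟩ : Fin _) < enc ⟨i, j⟩
        rw [Fin.lt_def]
        simp only [henc]
        omega
      · show (⟨enc ⟨i, j⟩, enc ⟨i', j'⟩⟩ : Σ _ : Fin (∑ t, k t), Fin (∑ t, k t)) = x
        have e1 : enc ⟨i, j⟩ = x.1 := Fin.ext (by simp only [henc]; omega)
        have e2 : enc ⟨i', j'⟩ = x.2 := Fin.ext (by simp only [henc]; omega)
        rw [e1, e2]
    · intro y _
      rfl
  rw [step1]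
  rw [← Finset.prod_filter_mul_prod_filter_not S (fun y => y.1.1 = y.2.1)]
  congr 1
  -- diagonal part
  · refine (Finset.prod_nbij
      (fun z : Σ i : Fin m, Σ _ : Fin (k i), Fin (k i) => (⟨⟨z.1, z.2.1⟩, ⟨z.1, z.2.2⟩⟩ :
        Σ _ : (Σ i : Fin m, Fin (k i)), (Σ i : Fin m, Fin (k i))))
      (s := Finset.univ.sigma fun i : Fin m => Equiv.Perm.finPairsLT (k i))
      (f := fun z => if α z.1 z.2.1 ≤ α z.1 z.2.2 then (-1 : ℤˣ) else 1)
      ?_ ?_ ?_ ?_).symm.trans ?_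
    · rintro ⟨i, j, j'⟩ hz
      simp only [Finset.mem_sigma, Finset.mem_univ, Equiv.Perm.mem_finPairsLT, true_and] at hz
      simp only [Finset.mem_filter, hSdef, Finset.mem_univ, true_and]
      constructor
      · show (enc ⟨i, j'⟩ : Fin _) < enc ⟨i, j⟩
        rw [Fin.lt_def]
        simp only [henc]
        have := (Fin.lt_def).mp hz
        omega
      · trivial
    · rintro ⟨i, j, j'⟩ - ⟨a, b, b'⟩ - hEq
      simp only [Sigma.mk.inj_iff] at hEq
      obtain ⟨⟨rfl, h1⟩, h2⟩ := hEq
      rw [heq_iff_eq] at h1 h2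
      obtain ⟨-, h2⟩ := Sigma.mk.inj_iff.mp h2
      rw [heq_iff_eq] at h2
      subst h1; subst h2
      rfl
    · rintro ⟨⟨i, j⟩, ⟨i', j'⟩⟩ hy
      simp only [Finset.mem_coe, Finset.mem_filter, hSdef, Finset.mem_univ, true_and] at hy
      obtain ⟨hlt, hd⟩ := hy
      have hd : i = i' := hd
      subst hd
      have hjj : j' < j := by
        have := Fin.lt_def.mp hlt
        simp only [henc] at this
        rw [Fin.lt_def]
        omega
      refine ⟨⟨i, j, j'⟩, ?_, rfl⟩
      simp [Equiv.Perm.mem_finPairsLT, hjj]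
    · rintro ⟨i, j, j'⟩ -
      show (if α i j ≤ α i j' then (-1 : ℤˣ) else 1)
          = if π (enc ⟨i, j⟩) ≤ π (enc ⟨i, j'⟩) then (-1 : ℤˣ) else 1
      refine if_congr ?_ rfl rfl
      rw [Fin.le_def, Fin.le_def, hπenc i j, hπenc i j']
      omega
    · rw [Finset.prod_sigma]
      exact Finset.prod_congr rfl fun i _ => rfl
  -- off-diagonal part
  · refine (Finset.prod_nbij
      (fun z : Σ x : (Σ _ : Fin m, Fin m), Fin (k x.1) × Fin (k x.2) =>
        (⟨⟨z.1.1, z.2.1⟩, ⟨z.1.2, z.2.2⟩⟩ :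
          Σ _ : (Σ i : Fin m, Fin (k i)), (Σ i : Fin m, Fin (k i))))
      (s := (Equiv.Perm.finPairsLT m).sigma fun x => (Finset.univ : Finset (Fin (k x.1) × Fin (k x.2))))
      (f := fun z => if σ z.1.1 ≤ σ z.1.2 then (-1 : ℤˣ) else 1)
      ?_ ?_ ?_ ?_).symm.trans ?_
    · rintro ⟨⟨i, i'⟩, j, j'⟩ hz
      simp only [Finset.mem_sigma, Equiv.Perm.mem_finPairsLT, Finset.mem_univ, and_true] at hz
      simp only [Finset.mem_filter, hSdef, Finset.mem_univ, true_and]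
      constructor
      · show (enc ⟨i', j'⟩ : Fin _) < enc ⟨i, j⟩
        rw [Fin.lt_def]
        simp only [henc]
        exact blocks_lt j'.isLt hz
      · show ¬ (i = i')
        exact hz.ne'
    · rintro ⟨⟨i, i'⟩, j, j'⟩ - ⟨⟨a, a'⟩, b, b'⟩ - hEq
      simp only [Sigma.mk.inj_iff] at hEq
      obtain ⟨⟨rfl, h1⟩, h2⟩ := hEq
      rw [heq_iff_eq] at h1 h2
      obtain ⟨rfl, h2⟩ := Sigma.mk.inj_iff.mp h2
      rw [heq_iff_eq] at h2
      subst h1; subst h2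
      rfl
    · rintro ⟨⟨i, j⟩, ⟨i', j'⟩⟩ hy
      simp only [Finset.mem_coe, Finset.mem_filter, hSdef, Finset.mem_univ, true_and] at hy
      obtain ⟨hlt, hd⟩ := hy
      have hd : i ≠ i' := hd
      have hii : i' < i := by
        have := Fin.lt_def.mp hlt
        simp only [henc] at this
        exact (lt_iff_of_ne j'.isLt j.isLt (Ne.symm hd)).mp this
      refine ⟨⟨⟨i, i'⟩, j, j'⟩, ?_, rfl⟩
      simp [Equiv.Perm.mem_finPairsLT, hii]
    · rintro ⟨⟨i, i'⟩, j, j'⟩ hz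
      simp only [Finset.mem_sigma, Equiv.Perm.mem_finPairsLT, Finset.mem_univ, and_true] at hz
      show (if σ i ≤ σ i' then (-1 : ℤˣ) else 1)
          = if π (enc ⟨i, j⟩) ≤ π (enc ⟨i', j'⟩) then (-1 : ℤˣ) else 1
      refine if_congr ?_ rfl rfl
      have hne : σ i ≠ σ i' := fun hc => hz.ne' (σ.injective hc)
      have hja : ((α i j : ℕ)) < kσ (σ i) := by rw [hkσ]; exact (α i j).isLt
      have hja' : ((α i' j' : ℕ)) < kσ (σ i') := by rw [hkσ]; exact (α i' j').isLt
      rw [Fin.le_def (a := π (enc ⟨i, j⟩)), hπenc i j, hπenc i' j']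
      constructor
      · intro hle
        have hlt : σ i < σ i' := lt_of_le_of_ne hle hne
        exact (blocks_lt (k := kσ) hja hlt).le
      · intro hle
        by_contra hgt
        rw [not_le] at hgt
        have hb := blocks_lt (k := kσ) (b := (α i j : ℕ)) hja' hgt
        omega
    · rw [Finset.prod_sigma]
      refine Finset.prod_congr rfl fun x _ => ?_
      show (∏ _s : Fin (k x.1) × Fin (k x.2), if σ x.1 ≤ σ x.2 then (-1 : ℤˣ) else 1)
          = (if σ x.1 ≤ σ x.2 then (-1 : ℤˣ) else 1) ^ (k x.1 * k x.2)
      rw [Finset.prod_const, Finset.card_univ, Fintype.card_prod, Fintype.card_fin,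
        Fintype.card_fin]


theorem units_eq_of_iff {a b : ℤˣ} (h : (a = 1 ↔ b = 1)) : a = b := by
  rcases Int.units_eq_one_or a with rfl | rfl <;>
    rcases Int.units_eq_one_or b with rfl | rfl <;> simp_all

theorem neg_one_pow_congr {a b : ℕ} (h : Even a ↔ Even b) : ((-1 : ℤˣ)) ^ a = (-1) ^ b := by
  rcases Nat.even_or_odd a with ha | ha
  · rw [ha.neg_one_pow, (h.mp ha).neg_one_pow]
  · have hb : Odd b := by
      rw [← Nat.not_even_iff_odd] at ha ⊢
      tauto
    rw [ha.neg_one_pow, hb.neg_one_pow]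

theorem even_sum_congr {m : ℕ} {k k' : Fin m → ℕ} (h : ∀ i, Even (k i) ↔ Even (k' i)) :
    Even (∑ i, k i) ↔ Even (∑ i, k' i) := by
  have e : ∀ i, k i % 2 = k' i % 2 := by
    intro i
    have := h i
    rw [Nat.even_iff, Nat.even_iff] at this
    omega
  have hmod : (∑ i, k i) % 2 = (∑ i, k' i) % 2 := by
    rw [Finset.sum_nat_mod, Finset.sum_nat_mod (f := k')]
    exact congrArg (· % 2) (Finset.sum_congr rfl fun i _ => e i)
  rw [Nat.even_iff, Nat.even_iff, hmod]

end InflAux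

/-- The set of properties `{EV, EL}` is query-complete. -/
theorem statement14 : QueryComplete {EV, EL} := by
  intro m σ k k' α α' hmatch P hP N N' π π' h h'
  have hEV : EV ∈ ({EV, EL} : Set (∀ n, Set (Perm n))) := Set.mem_insert _ _
  have hEL : EL ∈ ({EV, EL} : Set (∀ n, Set (Perm n))) := Set.mem_insert_of_mem _ rfl
  have hkk' : ∀ i, Even (k i) ↔ Even (k' i) := fun i => hmatch i EL hEL
  rw [Set.mem_insert_iff, Set.mem_singleton_iff] at hP
  rcases hP with rfl | rfl
  · show Equiv.Perm.sign π = 1 ↔ Equiv.Perm.sign π' = 1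
    rw [InflAux.sign_eq_signAux, InflAux.sign_eq_signAux,
      InflAux.signAux_inflation σ α π h, InflAux.signAux_inflation σ α' π' h']
    have h1 : (∏ i, Equiv.Perm.signAux (α i)) = ∏ i, Equiv.Perm.signAux (α' i) := by
      refine Finset.prod_congr rfl fun i _ => ?_
      have hiff : Equiv.Perm.sign (α i) = 1 ↔ Equiv.Perm.sign (α' i) = 1 := hmatch i EV hEV
      rw [InflAux.sign_eq_signAux, InflAux.sign_eq_signAux] at hiff
      exact InflAux.units_eq_of_iff hiff
    have h2 : (∏ x ∈ Equiv.Perm.finPairsLT m,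
          (if σ x.1 ≤ σ x.2 then (-1 : ℤˣ) else 1) ^ (k x.1 * k x.2))
        = ∏ x ∈ Equiv.Perm.finPairsLT m,
          (if σ x.1 ≤ σ x.2 then (-1 : ℤˣ) else 1) ^ (k' x.1 * k' x.2) := by
      refine Finset.prod_congr rfl fun x _ => ?_
      by_cases hc : σ x.1 ≤ σ x.2
      · simp only [if_pos hc]
        exact InflAux.neg_one_pow_congr
          (by rw [Nat.even_mul, Nat.even_mul, hkk' x.1, hkk' x.2])
      · simp only [if_neg hc, one_pow]
    rw [h1, h2]
  · show Even N ↔ Even N'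
    rw [h.2.1, h'.2.1]
    exact InflAux.even_sum_congr hkk'
end

section
/- Let σ be a simple permutation of length m ≥ 4 and let α₁,…,α_m be nonempty permutations. If π = σ[α₁,…,α_m] is an involution, then σ is an involution and α_i = (α_{σ(i)})⁻¹ for all 1 ≤ i ≤ m. -/
namespace Statement16Aux

open Finset

variable {m : ℕ}

def S (k : Fin m → ℕ) (i : Fin m) : ℕ := ∑ t ∈ univ.filter (fun t => t < i), k t

def U (σ : Perm m) (k : Fin m → ℕ) (i : Fin m) : ℕ :=
  ∑ t ∈ univ.filter (fun t => σ t < σ i), k t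

lemma S_add (k : Fin m → ℕ) (i : Fin m) :
    S k i + k i = ∑ t ∈ univ.filter (fun t => t ≤ i), k t := by
  have h : univ.filter (fun t => t ≤ i) = insert i (univ.filter (fun t => t < i)) := by
    ext t
    simp only [mem_filter, mem_insert, mem_univ, true_and]
    rw [le_iff_lt_or_eq, or_comm]
  rw [h, Finset.sum_insert (by simp)]
  exact add_comm _ _

lemma U_add (σ : Perm m) (k : Fin m → ℕ) (i : Fin m) :
    U σ k i + k i = ∑ t ∈ univ.filter (fun t => σ t ≤ σ i), k t := by
  have h : univ.filter (fun t => σ t ≤ σ i) = insert i (univ.filter (fun t => σ t < σ i)) := by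
    ext t
    simp only [mem_filter, mem_insert, mem_univ, true_and]
    rw [le_iff_lt_or_eq, or_comm]
    constructor
    · rintro (h | h)
      · exact Or.inl (σ.injective h)
      · exact Or.inr h
    · rintro (h | h)
      · exact Or.inl (by rw [h])
      · exact Or.inr h
  rw [h, Finset.sum_insert (by simp)]
  exact add_comm _ _

lemma S_mono (k : Fin m → ℕ) {i j : Fin m} (h : i ≤ j) : S k i ≤ S k j := by
  apply Finset.sum_le_sum_of_subset
  intro t ht
  simp only [mem_filter, mem_univ, true_and] at *
  exact lt_of_lt_of_le ht h

lemma S_add_le (k : Fin m → ℕ) {i j : Fin m} (h : i < j) : S k i + k i ≤ S k j := by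
  rw [S_add]
  apply Finset.sum_le_sum_of_subset
  intro t ht
  simp only [mem_filter, mem_univ, true_and] at *
  exact lt_of_le_of_lt ht h

lemma S_add_le_total (k : Fin m → ℕ) (i : Fin m) : S k i + k i ≤ ∑ t, k t := by
  rw [S_add]
  exact Finset.sum_le_sum_of_subset (Finset.subset_univ _)

lemma U_mono (σ : Perm m) (k : Fin m → ℕ) {i j : Fin m} (h : σ i ≤ σ j) :
    U σ k i ≤ U σ k j := by
  apply Finset.sum_le_sum_of_subset
  intro t ht
  simp only [mem_filter, mem_univ, true_and] at *
  exact lt_of_lt_of_le ht h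

lemma U_add_le (σ : Perm m) (k : Fin m → ℕ) {i j : Fin m} (h : σ i < σ j) :
    U σ k i + k i ≤ U σ k j := by
  rw [U_add]
  apply Finset.sum_le_sum_of_subset
  intro t ht
  simp only [mem_filter, mem_univ, true_and] at *
  exact lt_of_le_of_lt ht h

lemma U_add_le_total (σ : Perm m) (k : Fin m → ℕ) (i : Fin m) :
    U σ k i + k i ≤ ∑ t, k t := by
  rw [U_add]
  exact Finset.sum_le_sum_of_subset (Finset.subset_univ _)

lemma S_zero (k : Fin m → ℕ) (h0 : 0 < m) : S k ⟨0, h0⟩ = 0 := by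
  unfold S
  convert Finset.sum_empty
  ext t
  simp [Fin.lt_def]

lemma cover_S (k : Fin m → ℕ) (h0 : 0 < m) {p : ℕ} (hp : p < ∑ t, k t) :
    ∃ i, S k i ≤ p ∧ p < S k i + k i := by
  classical
  set F := univ.filter (fun i => S k i ≤ p) with hF
  have hne : F.Nonempty := ⟨⟨0, h0⟩, by simp [hF, S_zero k h0]⟩
  set i := F.max' hne with hi
  have hiF : i ∈ F := F.max'_mem hne
  have hile : S k i ≤ p := (mem_filter.mp hiF).2
  refine ⟨i, hile, ?_⟩
  by_contra hcon
  push_neg at hcon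
  by_cases hlast : (i : ℕ) + 1 < m
  · set i' : Fin m := ⟨(i : ℕ) + 1, hlast⟩ with hi'
    have hSi' : S k i' = S k i + k i := by
      rw [S_add]
      unfold S
      congr 1
      ext t
      simp only [mem_filter, mem_univ, true_and, Fin.lt_def, Fin.le_def]
      have hv : ((⟨(i : ℕ) + 1, hlast⟩ : Fin m) : ℕ) = (i : ℕ) + 1 := rfl
      omega
    have hi'F : i' ∈ F := by
      simp only [hF, mem_filter, mem_univ, true_and, hSi']
      omega
    have h1 := F.le_max' i' hi'F
    rw [← hi] at h1
    have h2 : i < i' := by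
      rw [Fin.lt_def]
      simp [hi']
    exact absurd h1 (not_le.mpr h2)
  · have huniv : univ.filter (fun t => t ≤ i) = (univ : Finset (Fin m)) := by
      ext t
      have ht := t.isLt
      have hii := i.isLt
      simp only [mem_filter, mem_univ, true_and, iff_true, Fin.le_def]
      omega
    have : S k i + k i = ∑ t, k t := by rw [S_add, huniv]
    omega

lemma cover_U (σ : Perm m) (k : Fin m → ℕ) (h0 : 0 < m) {q : ℕ} (hq : q < ∑ t, k t) :
    ∃ i, U σ k i ≤ q ∧ q < U σ k i + k i := by
  classical
  set F := univ.filter (fun i => U σ k i ≤ q) with hF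
  have hz : U σ k (σ.symm ⟨0, h0⟩) = 0 := by
    unfold U
    convert Finset.sum_empty
    ext t
    simp [σ.apply_symm_apply, Fin.lt_def]
  have hne : F.Nonempty := ⟨σ.symm ⟨0, h0⟩, by simp [hF, hz]⟩
  have hVne : (F.image σ).Nonempty := hne.image σ
  obtain ⟨i, hiF, hiv⟩ := mem_image.mp ((F.image σ).max'_mem hVne)
  have hile : U σ k i ≤ q := (mem_filter.mp hiF).2
  refine ⟨i, hile, ?_⟩
  by_contra hcon
  push_neg at hcon
  by_cases hlast : ((σ i : Fin m) : ℕ) + 1 < m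
  · set i' : Fin m := σ.symm ⟨(σ i : ℕ) + 1, hlast⟩ with hi'
    have hσi' : σ i' = ⟨(σ i : ℕ) + 1, hlast⟩ := σ.apply_symm_apply _
    have hUi' : U σ k i' = U σ k i + k i := by
      rw [U_add]
      unfold U
      congr 1
      ext t
      simp only [mem_filter, mem_univ, true_and, hσi', Fin.lt_def, Fin.le_def]
      omega
    have hi'F : i' ∈ F := by
      simp only [hF, mem_filter, mem_univ, true_and, hUi']
      omega
    have h1 := (F.image σ).le_max' (σ i') (mem_image_of_mem σ hi'F)
    rw [← hiv] at h1
    rw [Fin.le_def, hσi'] at h1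
    simp at h1
  · have huniv : univ.filter (fun t => σ t ≤ σ i) = (univ : Finset (Fin m)) := by
      ext t
      have ht := (σ t).isLt
      have hii := (σ i).isLt
      simp only [mem_filter, mem_univ, true_and, iff_true, Fin.le_def]
      omega
    have : U σ k i + k i = ∑ t, k t := by rw [U_add, huniv]
    omega

lemma S_disjoint (k : Fin m → ℕ) {a b : Fin m} {p : ℕ}
    (ha1 : S k a ≤ p) (ha2 : p < S k a + k a) (hb1 : S k b ≤ p) (hb2 : p < S k b + k b) :
    a = b := by
  rcases lt_trichotomy a b with h | h | h
  · have := S_add_le k h; omega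
  · exact h
  · have := S_add_le k h; omega

lemma U_disjoint (σ : Perm m) (k : Fin m → ℕ) {a b : Fin m} {q : ℕ}
    (ha1 : U σ k a ≤ q) (ha2 : q < U σ k a + k a) (hb1 : U σ k b ≤ q)
    (hb2 : q < U σ k b + k b) : a = b := by
  rcases lt_trichotomy (σ a) (σ b) with h | h | h
  · have := U_add_le σ k h; omega
  · exact σ.injective h
  · have := U_add_le σ k h; omega

lemma endpoint (hm : 4 ≤ m) (σ : Perm m) (hσ : IsSimple σ) {a b : Fin m}
    (ha : (a : ℕ) = 0 ∨ (a : ℕ) = m - 1) (hb : (b : ℕ) = 0 ∨ (b : ℕ) = m - 1) :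
    σ a ≠ b := by
  intro hab
  have hcard : (univ.erase a).card = m - 1 := by
    rw [Finset.card_erase_of_mem (mem_univ a), card_univ, Fintype.card_fin]
  have hrangeerase : ∀ (c : Fin m), (c : ℕ) = 0 ∨ (c : ℕ) = m - 1 →
      IsRange ((univ : Finset (Fin m)).erase c) := by
    intro c hc i j l hi hl hij hjl
    rw [Finset.mem_erase] at hi hl ⊢
    refine ⟨?_, mem_univ _⟩
    intro hjc
    rcases hc with h0 | h1
    · apply hi.1
      apply Fin.ext
      have h := Fin.le_def.mp hij
      have hj := congrArg Fin.val hjc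
      omega
    · apply hl.1
      apply Fin.ext
      have h := Fin.le_def.mp hjl
      have hj := congrArg Fin.val hjc
      have := l.isLt
      omega
  have himg : (univ.erase a).image σ = univ.erase b := by
    rw [Finset.image_erase σ.injective, hab]
    congr 1
    ext x
    simp only [mem_image, mem_univ, iff_true]
    exact ⟨σ.symm x, trivial, σ.apply_symm_apply x⟩
  have hint : IsPermInterval σ (univ.erase a) := by
    refine ⟨hrangeerase a ha, ?_⟩
    rw [himg]
    exact hrangeerase b hb
  have := hσ _ hint
  rw [hcard] at this
  omega

lemma heqPerm {a b : ℕ} (h : a = b) (p : Perm a) (q : Perm b)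
    (hpq : ∀ x : Fin a, (q (Fin.cast h x) : ℕ) = (p x : ℕ)) : HEq p q := by
  subst h
  apply heq_of_eq
  apply Equiv.ext
  intro x
  apply Fin.ext
  exact (hpq x).symm

end Statement16Aux

/-- If the inflation `π = σ[α 0, …, α (m-1)]` of a simple permutation `σ` of length
`m ≥ 4` is an involution, then `σ` is an involution and `α i = (α (σ i))⁻¹` for all `i`. -/
theorem statement16 (m : ℕ) (hm : 4 ≤ m) (σ : Perm m) (hσ : IsSimple σ)
    (k : Fin m → ℕ) (α : ∀ i, Perm (k i)) (N : ℕ) (π : Perm N)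
    (hinf : IsInflation σ α π) (hπ : π⁻¹ = π) :
    σ⁻¹ = σ ∧ ∀ i : Fin m, k i = k (σ i) ∧ HEq (α i) (α (σ i))⁻¹ := by
  classical
  open Statement16Aux Finset in
  obtain ⟨hk, hN, hval⟩ := hinf
  have hm0 : 0 < m := by omega
  have hsN : ∀ i, S k i + k i ≤ N := fun i => by rw [hN]; exact S_add_le_total k i
  have huN : ∀ i, U σ k i + k i ≤ N := fun i => by rw [hN]; exact U_add_le_total σ k i
  have hval2 : ∀ (i : Fin m) (j : Fin (k i)) (p : Fin N),
      (p : ℕ) = S k i + (j : ℕ) → (π p : ℕ) = U σ k i + (α i j : ℕ) := hval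
  have hval' : ∀ (a : Fin m) (p : Fin N) (h1 : S k a ≤ (p : ℕ)) (h2 : (p : ℕ) < S k a + k a),
      (π p : ℕ) = U σ k a + (α a ⟨(p : ℕ) - S k a, by omega⟩ : ℕ) := by
    intro a p h1 h2
    exact hval2 a ⟨(p : ℕ) - S k a, by omega⟩ p (by simp; omega)
  have hππ : ∀ p : Fin N, π (π p) = p := by
    intro p
    nth_rewrite 1 [← hπ]
    exact Equiv.symm_apply_apply π p
  have hblock : ∀ (a : Fin m) (p : Fin N), S k a ≤ (p : ℕ) → (p : ℕ) < S k a + k a →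
      U σ k a ≤ (π p : ℕ) ∧ (π p : ℕ) < U σ k a + k a := by
    intro a p h1 h2
    have h := hval' a p h1 h2
    have hlt := (α a ⟨(p : ℕ) - S k a, by omega⟩).isLt
    omega
  have hqblock : ∀ (a : Fin m) (q : Fin N), U σ k a ≤ (q : ℕ) → (q : ℕ) < U σ k a + k a →
      S k a ≤ (π q : ℕ) ∧ (π q : ℕ) < S k a + k a := by
    intro a q h1 h2
    obtain ⟨b, hb1, hb2⟩ := cover_S k hm0 (by rw [← hN]; exact (π q).isLt)
    have hq' := hblock b (π q) hb1 hb2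
    rw [hππ q] at hq'
    have hab : a = b := U_disjoint σ k h1 h2 hq'.1 hq'.2
    rw [hab]
    exact ⟨hb1, hb2⟩
  have hE : ∀ (i j : Fin m), (U σ k i < S k j + k j ∧ S k j < U σ k i + k i) ↔
      (S k i < U σ k j + k j ∧ U σ k j < S k i + k i) := by
    intro i j
    have hki := hk i
    have hkj := hk j
    constructor
    · rintro ⟨h1, h2⟩
      have hpN : max (S k j) (U σ k i) < N := by
        have := hsN j; omega
      set p : Fin N := ⟨max (S k j) (U σ k i), hpN⟩ with hp
      have hP := hblock j p (by simp [hp]) (by simp [hp]; omega)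
      have hQ := hqblock i p (by simp [hp]) (by simp [hp]; omega)
      omega
    · rintro ⟨h1, h2⟩
      have hpN : max (S k i) (U σ k j) < N := by
        have := hsN i; omega
      set p : Fin N := ⟨max (S k i) (U σ k j), hpN⟩ with hp
      have hP := hblock i p (by simp [hp]) (by simp [hp]; omega)
      have hQ := hqblock j p (by simp [hp]) (by simp [hp]; omega)
      omega
  set J : Fin m → Finset (Fin m) :=
    fun i => univ.filter (fun j => U σ k i < S k j + k j ∧ S k j < U σ k i + k i) with hJ
  have hJmem : ∀ i j, j ∈ J i ↔ (U σ k i < S k j + k j ∧ S k j < U σ k i + k i) := by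
    intro i j; simp [hJ]
  have hJint : ∀ i, IsPermInterval σ (J i) := by
    intro i
    constructor
    · intro a b c haJ hcJ hab hbc
      rw [hJmem] at haJ hcJ ⊢
      have h1 : S k a + k a ≤ S k b + k b := by
        rcases eq_or_lt_of_le hab with h | h
        · rw [h]
        · have := S_add_le k h
          have := hk b
          omega
      have h2 := S_mono k hbc
      omega
    · intro a b c haI hcI hab hbc
      rw [Finset.mem_image] at haI hcI ⊢
      obtain ⟨a', ha'J, rfl⟩ := haI
      obtain ⟨c', hc'J, rfl⟩ := hcI
      refine ⟨σ.symm b, ?_, σ.apply_symm_apply b⟩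
      rw [hJmem] at ha'J hc'J ⊢
      have ha'' := (hE i a').mp ha'J
      have hc'' := (hE i c').mp hc'J
      have hab' : σ a' ≤ σ (σ.symm b) := by rw [σ.apply_symm_apply]; exact hab
      have hbc' : σ (σ.symm b) ≤ σ c' := by rw [σ.apply_symm_apply]; exact hbc
      have h1 : U σ k a' + k a' ≤ U σ k (σ.symm b) + k (σ.symm b) := by
        rcases eq_or_lt_of_le hab' with h | h
        · rw [σ.injective h]
        · have := U_add_le σ k h
          have := hk (σ.symm b)
          omega
      have h2 := U_mono σ k hbc'
      rw [hE]
      omega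
  have hJne : ∀ i, (J i).Nonempty := by
    intro i
    have h1 : U σ k i < N := by have := huN i; have := hk i; omega
    obtain ⟨j, hj1, hj2⟩ := cover_S k hm0 (by rw [← hN]; exact h1)
    exact ⟨j, (hJmem i j).mpr ⟨hj2, by have := hk i; omega⟩⟩
  have hN0 : 0 < N := by have := hsN ⟨0, hm0⟩; have := hk ⟨0, hm0⟩; omega
  have hJcard : ∀ i, (J i).card = 1 := by
    intro i
    rcases hσ (J i) (hJint i) with h | h
    · have := Finset.card_pos.mpr (hJne i)
      omega
    · exfalso
      have hJuniv : J i = univ :=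
        Finset.eq_univ_of_card _ (by rw [h, Fintype.card_fin])
      have hov : ∀ j, U σ k i < S k j + k j ∧ S k j < U σ k i + k i :=
        fun j => (hJmem i j).mp (hJuniv ▸ mem_univ j)
      set z : Fin m := ⟨0, hm0⟩ with hz
      set w : Fin m := ⟨m - 1, by omega⟩ with hw
      have hSz : S k z = 0 := S_zero k hm0
      have hzw : z < w := by rw [Fin.lt_def]; simp [hz, hw]; omega
      have hovz := hov z
      have hovw := hov w
      have hmidP : ∀ j : Fin m, 0 < (j : ℕ) → (j : ℕ) < m - 1 →
          U σ k i ≤ S k j ∧ S k j + k j ≤ U σ k i + k i := by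
        intro j hj1 hj2
        have hzj : z < j := by rw [Fin.lt_def]; simp [hz]; omega
        have hjw : j < w := by rw [Fin.lt_def]; simp [hw]; omega
        have h1 := S_add_le k hzj
        have h2 := S_add_le k hjw
        omega
      have hmidQ : ∀ j : Fin m, 0 < (j : ℕ) → (j : ℕ) < m - 1 →
          ∀ q : Fin N, U σ k j ≤ (q : ℕ) → (q : ℕ) < U σ k j + k j →
          S k i ≤ (q : ℕ) ∧ (q : ℕ) < S k i + k i := by
        intro j hj1 hj2 q hq1 hq2
        have hpj := hqblock j q hq1 hq2
        have hmid := hmidP j hj1 hj2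
        have hqi := hqblock i (π q) (by omega) (by omega)
        rw [hππ q] at hqi
        exact hqi
      by_cases hi0 : (i : ℕ) = 0
      · set c : Fin m := σ.symm w with hc
        have hσc : σ c = w := σ.apply_symm_apply w
        have hc1 : 0 < (c : ℕ) := by
          rcases Nat.eq_zero_or_pos (c : ℕ) with h | h
          · exact absurd hσc (endpoint hm σ hσ (Or.inl h) (Or.inr rfl))
          · exact h
        have hc2 : (c : ℕ) < m - 1 := by
          rcases lt_or_ge ((c : ℕ)) (m - 1) with h | h
          · exact h
          · have : (c : ℕ) = m - 1 := by have := c.isLt; omega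
            exact absurd hσc (endpoint hm σ hσ (Or.inr this) (Or.inr rfl))
        have hUc : U σ k c + k c = ∑ t, k t := by
          rw [U_add]
          congr 1
          ext t
          have := (σ t).isLt
          simp only [Finset.mem_filter, mem_univ, true_and, iff_true, Fin.le_def, hσc]
          simp [hw]
          omega
        rw [← hN] at hUc
        have hq := hmidQ c hc1 hc2 ⟨N - 1, by omega⟩
          (by simp; have := hk c; omega) (by simp; omega)
        have hSi : S k i = 0 := by
          have : i = z := Fin.ext hi0
          rw [this, hSz]
        have h1 := S_add_le k hzw
        have h2 := hsN w
        have hkw := hk w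
        have : k i = k z := by rw [show i = z from Fin.ext hi0]
        simp at hq
        omega
      · by_cases him : (i : ℕ) = m - 1
        · set b : Fin m := σ.symm z with hb
          have hσb : σ b = z := σ.apply_symm_apply z
          have hb1 : 0 < (b : ℕ) := by
            rcases Nat.eq_zero_or_pos (b : ℕ) with h | h
            · exact absurd hσb (endpoint hm σ hσ (Or.inl h) (Or.inl rfl))
            · exact h
          have hb2 : (b : ℕ) < m - 1 := by
            rcases lt_or_ge ((b : ℕ)) (m - 1) with h | h
            · exact h
            · have : (b : ℕ) = m - 1 := by have := b.isLt; omega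
              exact absurd hσb (endpoint hm σ hσ (Or.inr this) (Or.inl rfl))
          have hUb : U σ k b = 0 := by
            unfold Statement16Aux.U
            convert Finset.sum_empty
            ext t
            simp [hσb, Fin.lt_def, hz]
          have hq := hmidQ b hb1 hb2 ⟨0, hN0⟩ (by simp [hUb]) (by simp [hUb]; exact hk b)
          have hiw : i = w := Fin.ext him
          have h1 := S_add_le k hzw
          have hkz := hk z
          rw [hiw] at hq
          simp at hq
          omega
        · have hmid := hmidP i (by omega) (by omega)
          have key : ∀ j' : Fin m, 0 < (j' : ℕ) → (j' : ℕ) < m - 1 → j' ≠ i → False := by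
            intro j' hj'1 hj'2 hne
            have h := hmidP j' hj'1 hj'2
            have hkj' := hk j'
            have heq : j' = i := S_disjoint k (le_refl (S k j')) (by omega) (by omega) (by omega)
            exact hne heq
          by_cases h1 : (i : ℕ) = 1
          · exact key ⟨2, by omega⟩ (by norm_num) (by simp; omega)
              (by intro h; have := congrArg Fin.val h; simp at this; omega)
          · exact key ⟨1, by omega⟩ (by norm_num) (by simp; omega)
              (by intro h; have := congrArg Fin.val h; simp at this; omega)
  have hext : ∀ i, U σ k i = S k (σ i) ∧ k i = k (σ i) → True := fun _ _ => trivial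
  clear hext
  have hext : ∀ i, ∃ j, U σ k i = S k j ∧ k i = k j := by
    intro i
    obtain ⟨j, hJi⟩ := Finset.card_eq_one.mp (hJcard i)
    have hki := hk i
    have hkj := hk j
    have hNi1 : U σ k i < N := by have := huN i; omega
    have hNi2 : U σ k i + k i - 1 < N := by have := huN i; omega
    obtain ⟨b1, hb11, hb12⟩ := cover_S k hm0 (by rw [← hN]; exact hNi1)
    have hb1J : b1 = j := by
      have : b1 ∈ J i := (hJmem i b1).mpr ⟨hb12, by omega⟩
      rw [hJi] at this
      exact Finset.mem_singleton.mp this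
    obtain ⟨b2, hb21, hb22⟩ := cover_S k hm0 (by rw [← hN]; exact hNi2)
    have hb2J : b2 = j := by
      have : b2 ∈ J i := (hJmem i b2).mpr ⟨by omega, by omega⟩
      rw [hJi] at this
      exact Finset.mem_singleton.mp this
    rw [hb1J] at hb11 hb12
    rw [hb2J] at hb21 hb22
    -- so S k j ≤ U i and U i + k i ≤ S k j + k j
    have hjJi : j ∈ J i := by rw [hJi]; exact Finset.mem_singleton_self j
    have hiJj : i ∈ J j := by
      rw [hJmem]
      have := (hE i j).mp ((hJmem i j).mp hjJi)
      exact ⟨this.2, this.1⟩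
    have hJj : J j = {i} := by
      obtain ⟨i', hJj'⟩ := Finset.card_eq_one.mp (hJcard j)
      rw [hJj'] at hiJj ⊢
      rw [Finset.mem_singleton.mp hiJj]
    have hSjN : S k j < N := by have := hsN j; omega
    have hSjN2 : S k j + k j - 1 < N := by have := hsN j; omega
    obtain ⟨c1, hc11, hc12⟩ := cover_U σ k hm0 (by rw [← hN]; exact hSjN)
    have hc1i : c1 = i := by
      have hmem : c1 ∈ J j := by
        rw [hJmem]
        have := (hE c1 j).mp ⟨by omega, by omega⟩
        exact ⟨this.2, this.1⟩
      rw [hJj] at hmem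
      exact Finset.mem_singleton.mp hmem
    obtain ⟨c2, hc21, hc22⟩ := cover_U σ k hm0 (by rw [← hN]; exact hSjN2)
    have hc2i : c2 = i := by
      have hmem : c2 ∈ J j := by
        have hkc2 := hk c2
        rw [hJmem]
        have := (hE c2 j).mp ⟨by omega, by omega⟩
        exact ⟨this.2, this.1⟩
      rw [hJj] at hmem
      exact Finset.mem_singleton.mp hmem
    rw [hc1i] at hc11 hc12
    rw [hc2i] at hc21 hc22
    exact ⟨j, by omega, by omega⟩
  choose f hf1 hf2 using hext
  have hfσ : ∀ i, f i = σ i := by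
    have hg : StrictMono (fun v => f (σ.symm v)) := by
      intro v v' hvv
      have h := U_add_le σ k (i := σ.symm v) (j := σ.symm v')
        (by rw [σ.apply_symm_apply, σ.apply_symm_apply]; exact hvv)
      rw [hf1 (σ.symm v), hf1 (σ.symm v'), hf2 (σ.symm v)] at h
      by_contra hle
      push_neg at hle
      have := S_mono k hle
      have := hk (f (σ.symm v))
      omega
    have hrange : Set.range (fun v => f (σ.symm v)) = Set.range (id : Fin m → Fin m) := by
      rw [Set.range_id]
      rw [Set.range_eq_univ]
      exact Finite.surjective_of_injective hg.injective
    have hId := (hg.range_inj strictMono_id).mp hrange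
    intro i
    have := congrFun hId (σ i)
    simpa using this
  have hUS : ∀ i, U σ k i = S k (σ i) := fun i => (hf1 i).trans (by rw [hfσ])
  have hkk : ∀ i, k i = k (σ i) := fun i => (hf2 i).trans (by rw [hfσ])
  have hmain : ∀ (i : Fin m) (j : Fin (k i)), σ (σ i) = i ∧
      ((α (σ i)) (Fin.cast (hkk i) ((α i) j)) : ℕ) = (j : ℕ) := by
    intro i j
    have hji := j.isLt
    have hpN : S k i + (j : ℕ) < N := by have := hsN i; omega
    set p : Fin N := ⟨S k i + (j : ℕ), hpN⟩ with hp
    have h1 : (π p : ℕ) = U σ k i + (α i j : ℕ) := hval2 i j p rfl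
    rw [hUS] at h1
    set j2 : Fin (k (σ i)) := Fin.cast (hkk i) (α i j) with hj2
    have h2 : (π (π p) : ℕ) = U σ k (σ i) + (α (σ i) j2 : ℕ) := by
      apply hval2 (σ i) j2 (π p)
      rw [h1, hj2, Fin.coe_cast]
    rw [hππ p, hUS] at h2
    have hlt2 := (α (σ i) j2).isLt
    have hkσ := hkk (σ i)
    have hpv : (p : ℕ) = S k i + (j : ℕ) := rfl
    have hσσ : σ (σ i) = i := by
      apply S_disjoint k (p := (p : ℕ)) (by omega) (by omega) (by omega) (by omega)
    rw [hσσ] at h2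
    exact ⟨hσσ, by omega⟩
  have hinvol : ∀ i, σ (σ i) = i := fun i => (hmain i ⟨0, hk i⟩).1
  refine ⟨?_, ?_⟩
  · apply Equiv.ext
    intro x
    conv_lhs => rw [← hinvol x]
    exact Equiv.symm_apply_apply σ (σ x)
  · intro i
    refine ⟨hkk i, ?_⟩
    apply Statement16Aux.heqPerm (hkk i)
    intro x
    have h := (hmain i x).2
    have hstep : (α (σ i)) (Fin.cast (hkk i) (α i x)) = Fin.cast (hkk i) x := by
      apply Fin.ext
      rw [h, Fin.coe_cast]
    rw [← hstep, Equiv.Perm.inv_def, Equiv.symm_apply_apply, Fin.coe_cast]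
end

section
/- Let π be a permutation that can be written as 12[β₁,β₂] or as 21[β₁,β₂] for some nonempty permutations β₁, β₂. Then π is an involution if and only if π has at least one of the following forms: (i) π = 12[α₁,α₂] with α₁ and α₂ involutions; (ii) π = 21[α₁,α₂] with α₁ and α₂ skew indecomposable and α₂ = α₁⁻¹; (iii) π = 321[α₁,α₂,α₃] with α₁ and α₃ skew indecomposable, α₃ = α₁⁻¹, and α₂ an involution. -/
/-- The identity permutation `12` of length `2`. -/
def perm12 : Perm 2 := 1

/-- The decreasing permutation `21` of length `2`. -/
def perm21 : Perm 2 := Equiv.swap 0 1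

/-- A permutation is sum indecomposable if it is not an inflation of `12`
by nonempty permutations. -/
def SumIndecomposable {n : ℕ} (π : Perm n) : Prop :=
  ¬ ∃ (k : Fin 2 → ℕ) (α : ∀ i, Perm (k i)), IsInflation perm12 α π

/-- A permutation is skew indecomposable if it is not an inflation of `21`
by nonempty permutations. -/
def SkewIndecomposable {n : ℕ} (π : Perm n) : Prop :=
  ¬ ∃ (k : Fin 2 → ℕ) (α : ∀ i, Perm (k i)), IsInflation perm21 α π

/-- The decreasing permutation `321` of length `3`. -/
def perm321 : Perm 3 := ⟨![2, 1, 0], ![2, 1, 0], by intro x; fin_cases x <;> decide,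
  by intro x; fin_cases x <;> decide⟩

set_option linter.unusedTactic false

theorem Equiv.Perm.apply_inv_self {α : Type*} (σ : Equiv.Perm α) (x : α) : σ (σ⁻¹ x) = x :=
  (Equiv.eq_symm_apply σ).mp rfl

theorem Equiv.Perm.inv_apply_self {α : Type*} (σ : Equiv.Perm α) (x : α) : σ⁻¹ (σ x) = x :=
  Equiv.Perm.inv_eq_iff_eq.mpr rfl

theorem isInflation12_iff {N : ℕ} (π : Perm N) (k : Fin 2 → ℕ) (α : ∀ i, Perm (k i)) :
    IsInflation perm12 α π ↔ (0 < k 0 ∧ 0 < k 1 ∧ N = k 0 + k 1 ∧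
      (∀ (j : Fin (k 0)) (p : Fin N), (p:ℕ) = (j:ℕ) → (π p : ℕ) = (α 0 j : ℕ)) ∧
      (∀ (j : Fin (k 1)) (p : Fin N), (p:ℕ) = k 0 + (j:ℕ) → (π p : ℕ) = k 0 + (α 1 j : ℕ))) := by
  constructor
  · rintro ⟨h1, h2, h3⟩
    refine ⟨h1 0, h1 1, by simpa [Fin.sum_univ_two] using h2, ?_, ?_⟩
    · intro j p hp
      have := h3 0 j p (by simpa +decide [Finset.sum_filter, Fin.sum_univ_two] using hp)
      simpa +decide [Finset.sum_filter, Fin.sum_univ_two, perm12] using this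
    · intro j p hp
      have := h3 1 j p (by simpa +decide [Finset.sum_filter, Fin.sum_univ_two] using hp)
      simpa +decide [Finset.sum_filter, Fin.sum_univ_two, perm12] using this
  · rintro ⟨h0, h1, hN, hA, hB⟩
    refine ⟨fun i => by fin_cases i <;> assumption, by simpa [Fin.sum_univ_two] using hN, ?_⟩
    intro i
    fin_cases i
    · intro j p hp
      have := hA j p (by simpa +decide [Finset.sum_filter, Fin.sum_univ_two] using hp)
      simpa +decide [Finset.sum_filter, Fin.sum_univ_two, perm12] using this
    · intro j p hp
      have := hB j p (by simpa +decide [Finset.sum_filter, Fin.sum_univ_two] using hp)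
      simpa +decide [Finset.sum_filter, Fin.sum_univ_two, perm12] using this

theorem isInflation21_iff {N : ℕ} (π : Perm N) (k : Fin 2 → ℕ) (α : ∀ i, Perm (k i)) :
    IsInflation perm21 α π ↔ (0 < k 0 ∧ 0 < k 1 ∧ N = k 0 + k 1 ∧
      (∀ (j : Fin (k 0)) (p : Fin N), (p:ℕ) = (j:ℕ) → (π p : ℕ) = k 1 + (α 0 j : ℕ)) ∧
      (∀ (j : Fin (k 1)) (p : Fin N), (p:ℕ) = k 0 + (j:ℕ) → (π p : ℕ) = (α 1 j : ℕ))) := by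
  constructor
  · rintro ⟨h1, h2, h3⟩
    refine ⟨h1 0, h1 1, by simpa [Fin.sum_univ_two] using h2, ?_, ?_⟩
    · intro j p hp
      have := h3 0 j p (by simpa +decide [Finset.sum_filter, Fin.sum_univ_two] using hp)
      simpa +decide [Finset.sum_filter, Fin.sum_univ_two, perm21] using this
    · intro j p hp
      have := h3 1 j p (by simpa +decide [Finset.sum_filter, Fin.sum_univ_two] using hp)
      simpa +decide [Finset.sum_filter, Fin.sum_univ_two, perm21] using this
  · rintro ⟨h0, h1, hN, hA, hB⟩
    refine ⟨fun i => by fin_cases i <;> assumption, by simpa [Fin.sum_univ_two] using hN, ?_⟩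
    intro i
    fin_cases i
    · intro j p hp
      have := hA j p (by simpa +decide [Finset.sum_filter, Fin.sum_univ_two] using hp)
      simpa +decide [Finset.sum_filter, Fin.sum_univ_two, perm21] using this
    · intro j p hp
      have := hB j p (by simpa +decide [Finset.sum_filter, Fin.sum_univ_two] using hp)
      simpa +decide [Finset.sum_filter, Fin.sum_univ_two, perm21] using this

theorem sum321 (k : Fin 3 → ℕ) :
    ∑ t ∈ Finset.univ.filter (fun t : Fin 3 => perm321 t < perm321 0), k t = k 1 + k 2 := by
  rw [show Finset.univ.filter (fun t : Fin 3 => perm321 t < perm321 0) = {1, 2} by decide]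
  simp

theorem isInflation321_iff {N : ℕ} (π : Perm N) (k : Fin 3 → ℕ) (α : ∀ i, Perm (k i)) :
    IsInflation perm321 α π ↔ (0 < k 0 ∧ 0 < k 1 ∧ 0 < k 2 ∧ N = k 0 + k 1 + k 2 ∧
      (∀ (j : Fin (k 0)) (p : Fin N), (p:ℕ) = (j:ℕ) → (π p : ℕ) = (k 1 + k 2) + (α 0 j : ℕ)) ∧
      (∀ (j : Fin (k 1)) (p : Fin N), (p:ℕ) = k 0 + (j:ℕ) → (π p : ℕ) = k 2 + (α 1 j : ℕ)) ∧
      (∀ (j : Fin (k 2)) (p : Fin N), (p:ℕ) = k 0 + k 1 + (j:ℕ) → (π p : ℕ) = (α 2 j : ℕ))) := by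
  constructor
  · rintro ⟨h1, h2, h3⟩
    refine ⟨h1 0, h1 1, h1 2, by simpa [Fin.sum_univ_three] using h2, ?_, ?_, ?_⟩
    · intro j p hp
      have := h3 0 j p (by simpa +decide [Finset.sum_filter, Fin.sum_univ_three] using hp)
      rw [sum321] at this
      simpa +decide [Finset.sum_filter, Fin.sum_univ_three, perm321, add_assoc] using this
    · intro j p hp
      have := h3 1 j p (by simpa +decide [Finset.sum_filter, Fin.sum_univ_three] using hp)
      simpa +decide [Finset.sum_filter, Fin.sum_univ_three, perm321] using this
    · intro j p hp
      have := h3 2 j p (by simpa +decide [Finset.sum_filter, Fin.sum_univ_three] using hp)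
      simpa +decide [Finset.sum_filter, Fin.sum_univ_three, perm321] using this
  · rintro ⟨h0, h1, h2, hN, hA, hB, hC⟩
    refine ⟨fun i => by fin_cases i <;> assumption, by simpa [Fin.sum_univ_three] using hN, ?_⟩
    intro i
    fin_cases i
    · intro j p hp
      have := hA j p (by simpa +decide [Finset.sum_filter, Fin.sum_univ_three] using hp)
      erw [sum321]
      simpa +decide [Finset.sum_filter, Fin.sum_univ_three, perm321, add_assoc] using this
    · intro j p hp
      have := hB j p (by simpa +decide [Finset.sum_filter, Fin.sum_univ_three] using hp)
      simpa +decide [Finset.sum_filter, Fin.sum_univ_three, perm321] using this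
    · intro j p hp
      have := hC j p (by simpa +decide [Finset.sum_filter, Fin.sum_univ_three] using hp)
      simpa +decide [Finset.sum_filter, Fin.sum_univ_three, perm321] using this

/-- position `u + j` of a block inside `Fin N`. -/
def bpos {N : ℕ} (u c : ℕ) (h : u + c ≤ N) (j : Fin c) : Fin N :=
  ⟨u + j, by have := j.isLt; omega⟩

def blockMap {N : ℕ} (π : Perm N) (u v c : ℕ) (h : u + c ≤ N) (j : Fin c) : Fin c :=
  ⟨min ((π (bpos u c h j) : ℕ) - v) (c - 1), by have := j.isLt; omega⟩

theorem blockMap_val {N : ℕ} (π : Perm N) (u v c : ℕ) (h : u + c ≤ N)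
    (hv : ∀ j : Fin c, v ≤ (π (bpos u c h j) : ℕ) ∧ (π (bpos u c h j) : ℕ) < v + c)
    (j : Fin c) : v + (blockMap π u v c h j : ℕ) = (π (bpos u c h j) : ℕ) := by
  have h1 := (hv j).1
  have h2 := (hv j).2
  have hc := j.isLt
  simp only [blockMap]
  omega

theorem blockMap_inj {N : ℕ} (π : Perm N) (u v c : ℕ) (h : u + c ≤ N)
    (hv : ∀ j : Fin c, v ≤ (π (bpos u c h j) : ℕ) ∧ (π (bpos u c h j) : ℕ) < v + c) :
    Function.Injective (blockMap π u v c h) := by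
  intro j j' hjj
  have e1 := blockMap_val π u v c h hv j
  have e2 := blockMap_val π u v c h hv j'
  rw [hjj] at e1
  have : π (bpos u c h j) = π (bpos u c h j') := Fin.ext (by (try simp only [Fin.val_mk]); omega)
  have := π.injective this
  have := congrArg Fin.val this
  simp only [bpos] at this
  exact Fin.ext (by (try simp only [Fin.val_mk]); omega)

noncomputable def blockPerm {N : ℕ} (π : Perm N) (u v c : ℕ) (h : u + c ≤ N)
    (hv : ∀ j : Fin c, v ≤ (π (bpos u c h j) : ℕ) ∧ (π (bpos u c h j) : ℕ) < v + c) :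
    Perm c :=
  Equiv.ofBijective _ (Finite.injective_iff_bijective.mp (blockMap_inj π u v c h hv))

theorem blockPerm_val {N : ℕ} (π : Perm N) (u v c : ℕ) (h : u + c ≤ N)
    (hv : ∀ j : Fin c, v ≤ (π (bpos u c h j) : ℕ) ∧ (π (bpos u c h j) : ℕ) < v + c)
    (j : Fin c) : v + (blockPerm π u v c h hv j : ℕ) = (π (bpos u c h j) : ℕ) :=
  blockMap_val π u v c h hv j

def pairP {a b : ℕ} (x : Perm a) (y : Perm b) : ∀ i : Fin 2, Perm (![a, b] i)
  | ⟨0, _⟩ => x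
  | ⟨1, _⟩ => y

@[simp] theorem pairP_zero {a b : ℕ} (x : Perm a) (y : Perm b) : pairP x y 0 = x := rfl
@[simp] theorem pairP_one {a b : ℕ} (x : Perm a) (y : Perm b) : pairP x y 1 = y := rfl

def tripP {a b c : ℕ} (x : Perm a) (y : Perm b) (z : Perm c) : ∀ i : Fin 3, Perm (![a, b, c] i)
  | ⟨0, _⟩ => x
  | ⟨1, _⟩ => y
  | ⟨2, _⟩ => z

@[simp] theorem tripP_zero {a b c : ℕ} (x : Perm a) (y : Perm b) (z : Perm c) :
    tripP x y z 0 = x := rfl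
@[simp] theorem tripP_one {a b c : ℕ} (x : Perm a) (y : Perm b) (z : Perm c) :
    tripP x y z 1 = y := rfl
@[simp] theorem tripP_two {a b c : ℕ} (x : Perm a) (y : Perm b) (z : Perm c) :
    tripP x y z 2 = z := rfl

def SSplit {N : ℕ} (π : Perm N) (a : ℕ) : Prop :=
  0 < a ∧ a < N ∧ (∀ p : Fin N, (p:ℕ) < a → N - a ≤ (π p : ℕ)) ∧
    (∀ p : Fin N, a ≤ (p:ℕ) → (π p : ℕ) < N - a)

theorem SSplit.of_inflation {N : ℕ} {π : Perm N} {k : Fin 2 → ℕ} {α : ∀ i, Perm (k i)}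
    (h : IsInflation perm21 α π) : SSplit π (k 0) := by
  rw [isInflation21_iff] at h
  obtain ⟨h0, h1, hN, hA, hB⟩ := h
  refine ⟨h0, by omega, ?_, ?_⟩
  · intro p hp
    have := hA ⟨p, hp⟩ p rfl
    have hb := (α 0 ⟨p, hp⟩).isLt
    omega
  · intro p hp
    have hj : (p : ℕ) - k 0 < k 1 := by have := p.isLt; omega
    have := hB ⟨(p:ℕ) - k 0, hj⟩ p (by simp; omega)
    have hb := (α 1 ⟨(p:ℕ) - k 0, hj⟩).isLt
    omega

theorem SSplit.to_inflation {N : ℕ} {π : Perm N} {a : ℕ} (h : SSplit π a) :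
    ∃ (k : Fin 2 → ℕ) (α : ∀ i, Perm (k i)), IsInflation perm21 α π ∧ k 0 = a := by
  obtain ⟨ha0, haN, hA, hB⟩ := h
  have hb : a + (N - a) ≤ N := by omega
  have hv0 : ∀ j : Fin a, (N - a) ≤ (π (bpos 0 a (by (try simp only [Fin.val_mk]); omega) j) : ℕ) ∧
      (π (bpos 0 a (by (try simp only [Fin.val_mk]); omega) j) : ℕ) < (N - a) + a := by
    intro j
    have h1 := hA (bpos 0 a (by (try simp only [Fin.val_mk]); omega) j) (by simp [bpos])
    have h2 := (π (bpos 0 a (by (try simp only [Fin.val_mk]); omega) j)).isLt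
    omega
  have hv1 : ∀ j : Fin (N - a), 0 ≤ (π (bpos a (N - a) hb j) : ℕ) ∧
      (π (bpos a (N - a) hb j) : ℕ) < 0 + (N - a) := by
    intro j
    have h1 := hB (bpos a (N - a) hb j) (by simp [bpos])
    omega
  refine ⟨![a, N - a], pairP (blockPerm π 0 (N - a) a (by (try simp only [Fin.val_mk]); omega) hv0)
    (blockPerm π a 0 (N - a) hb hv1), ?_, rfl⟩
  rw [isInflation21_iff]
  simp only [Matrix.cons_val_zero, Matrix.cons_val_one, Matrix.head_cons, pairP_zero, pairP_one]
  refine ⟨ha0, by omega, by omega, ?_, ?_⟩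
  · intro j p hp
    have hpj : p = bpos 0 a (by (try simp only [Fin.val_mk]); omega) j := Fin.ext (by simp [bpos, hp])
    rw [hpj]
    exact (blockPerm_val π 0 (N - a) a (by (try simp only [Fin.val_mk]); omega) hv0 j).symm
  · intro j p hp
    have hpj : p = bpos a (N - a) hb j := Fin.ext (by simp [bpos, hp])
    rw [hpj]
    have := (blockPerm_val π a 0 (N - a) hb hv1 j).symm
    omega

theorem skewIndec_iff {n : ℕ} (π : Perm n) : SkewIndecomposable π ↔ ∀ c, ¬ SSplit π c := by
  constructor
  · intro h c hc
    obtain ⟨k, α, hi, _⟩ := hc.to_inflation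
    exact h ⟨k, α, hi⟩
  · rintro h ⟨k, α, hi⟩
    exact h (k 0) (SSplit.of_inflation hi)

theorem SSplit.inv {n : ℕ} {π : Perm n} {a : ℕ} (h : SSplit π a) : SSplit π⁻¹ (n - a) := by
  obtain ⟨ha0, haN, hA, hB⟩ := h
  refine ⟨by omega, by omega, ?_, ?_⟩
  · intro p hp
    by_contra hcon
    push_neg at hcon
    have h2 : n - a ≤ (π (π⁻¹ p) : ℕ) := hA (π⁻¹ p) (by (try simp only [Fin.val_mk]); omega)
    rw [Equiv.Perm.apply_inv_self] at h2
    omega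
  · intro p hp
    by_contra hcon
    push_neg at hcon
    have h2 : (π (π⁻¹ p) : ℕ) < n - a := hB (π⁻¹ p) (by (try simp only [Fin.val_mk]); omega)
    rw [Equiv.Perm.apply_inv_self] at h2
    omega

theorem SkewIndecomposable.inv {n : ℕ} {π : Perm n} (h : SkewIndecomposable π) :
    SkewIndecomposable π⁻¹ := by
  rw [skewIndec_iff] at h ⊢
  intro c hc
  have := hc.inv
  rw [inv_inv] at this
  exact h _ this

theorem perm_heq_apply {a b : ℕ} (e : a = b) {β : Perm a} {γ : Perm b} (h : HEq γ β)
    (j : ℕ) (h1 : j < b) (h2 : j < a) : ((γ ⟨j, h1⟩ : ℕ)) = (β ⟨j, h2⟩ : ℕ) := by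
  subst e; cases h; rfl

theorem perm_heq_of_val {a b : ℕ} (e : a = b) {β : Perm a} {γ : Perm b}
    (h : ∀ (j : ℕ) (h1 : j < b) (h2 : j < a), (γ ⟨j, h1⟩ : ℕ) = (β ⟨j, h2⟩ : ℕ)) :
    HEq γ β := by
  subst e
  refine heq_of_eq (Equiv.ext fun j => ?_)
  exact Fin.ext (by simpa using h j j.isLt j.isLt)

theorem inv_eq_self_iff' {n : ℕ} (σ : Perm n) : σ⁻¹ = σ ↔ ∀ x, σ (σ x) = x := by
  constructor
  · intro h x
    nth_rewrite 1 [← h]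
    exact Equiv.Perm.inv_apply_self σ x
  · intro h
    refine Equiv.ext fun x => ?_
    apply σ.injective
    rw [Equiv.Perm.apply_inv_self, h]

/-- A permutation that is an inflation of `12` or of `21` is an involution exactly when
it has one of the three displayed forms. -/
theorem statement17 (N : ℕ) (π : Perm N)
    (hdec : (∃ (k : Fin 2 → ℕ) (β : ∀ i, Perm (k i)), IsInflation perm12 β π) ∨
      (∃ (k : Fin 2 → ℕ) (β : ∀ i, Perm (k i)), IsInflation perm21 β π)) :
    π⁻¹ = π ↔
      ((∃ (k : Fin 2 → ℕ) (α : ∀ i, Perm (k i)),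
        IsInflation perm12 α π ∧ (α 0)⁻¹ = α 0 ∧ (α 1)⁻¹ = α 1) ∨
      (∃ (k : Fin 2 → ℕ) (α : ∀ i, Perm (k i)),
        IsInflation perm21 α π ∧ SkewIndecomposable (α 0) ∧ SkewIndecomposable (α 1) ∧
          k 0 = k 1 ∧ HEq (α 1) (α 0)⁻¹) ∨
      (∃ (k : Fin 3 → ℕ) (α : ∀ i, Perm (k i)),
        IsInflation perm321 α π ∧ SkewIndecomposable (α 0) ∧ SkewIndecomposable (α 2) ∧
          k 0 = k 2 ∧ HEq (α 2) (α 0)⁻¹ ∧ (α 1)⁻¹ = α 1)) := by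
  classical
  constructor
  · intro hinv
    have hπ2 : ∀ p, π (π p) = p := (inv_eq_self_iff' π).mp hinv
    rcases hdec with ⟨k, β, hβ⟩ | ⟨k, β, hβ⟩
    · -- sum-decomposable case
      left
      refine ⟨k, β, hβ, ?_, ?_⟩
      · rw [isInflation12_iff] at hβ
        obtain ⟨hk0, hk1, hN, hA, hB⟩ := hβ
        rw [inv_eq_self_iff']
        intro j
        have hjN : (j:ℕ) < N := by have := j.isLt; omega
        have e1 := hA j ⟨j, hjN⟩ rfl
        have e2 := hA (β 0 j) (π ⟨j, hjN⟩) e1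
        rw [hπ2 ⟨j, hjN⟩] at e2
        exact Fin.ext e2.symm
      · rw [isInflation12_iff] at hβ
        obtain ⟨hk0, hk1, hN, hA, hB⟩ := hβ
        rw [inv_eq_self_iff']
        intro j
        have hjN : k 0 + (j:ℕ) < N := by have := j.isLt; omega
        have e1 := hB j ⟨k 0 + j, hjN⟩ rfl
        have e2 := hB (β 1 j) (π ⟨k 0 + j, hjN⟩) e1
        rw [hπ2 ⟨k 0 + j, hjN⟩] at e2
        exact Fin.ext (by simpa using e2.symm)
    · -- skew-decomposable case
      right
      have hex : ∃ a, SSplit π a := ⟨k 0, SSplit.of_inflation hβ⟩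
      set a := Nat.find hex with hadef
      have ha : SSplit π a := Nat.find_spec hex
      have hmin : ∀ c, c < a → ¬ SSplit π c := fun c hc => Nat.find_min hex hc
      obtain ⟨ha0, haN, hA, hB⟩ := ha
      set b := N - a with hbdef
      have habN : a + b = N := by omega
      have F3 : ∀ p : Fin N, b ≤ (p:ℕ) → (π p : ℕ) < a := by
        intro p hp
        by_contra hcon
        push_neg at hcon
        have := hB (π p) hcon
        rw [hπ2 p] at this
        omega
      have F4 : ∀ p : Fin N, (p:ℕ) < b → a ≤ (π p : ℕ) := by
        intro p hp
        by_contra hcon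
        push_neg at hcon
        have := hA (π p) hcon
        rw [hπ2 p] at this
        omega
      have hab : a ≤ b := by
        by_contra hcon
        push_neg at hcon
        refine hmin b hcon ⟨by omega, by omega, ?_, ?_⟩
        · intro p hp
          have := F4 p hp
          omega
        · intro p hp
          have := F3 p hp
          omega
      have h0a : 0 + a ≤ N := by omega
      have hv0 : ∀ j : Fin a, b ≤ (π (bpos 0 a h0a j) : ℕ) ∧
          (π (bpos 0 a h0a j) : ℕ) < b + a := by
        intro j
        have h1 := hA (bpos 0 a h0a j) (by simp [bpos])
        have h2 := (π (bpos 0 a h0a j)).isLt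
        omega
      set α0 := blockPerm π 0 b a h0a hv0 with hα0def
      have hα0 : ∀ j : Fin a, (π (bpos 0 a h0a j) : ℕ) = b + (α0 j : ℕ) :=
        fun j => (blockPerm_val π 0 b a h0a hv0 j).symm
      have hba : b + a ≤ N := by omega
      have hα0inv : ∀ j : Fin a, (π (bpos b a hba j) : ℕ) = (α0⁻¹ j : ℕ) := by
        intro j
        have hq : α0 (α0⁻¹ j) = j := Equiv.Perm.apply_inv_self α0 j
        have e1 : (π (bpos 0 a h0a (α0⁻¹ j)) : ℕ) = b + (j : ℕ) := by
          rw [hα0 (α0⁻¹ j), hq]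
        have hpe : bpos b a hba j = π (bpos 0 a h0a (α0⁻¹ j)) := Fin.ext (by rw [e1]; simp [bpos])
        rw [hpe, hπ2]
        simp [bpos]
      have hindec0 : SkewIndecomposable α0 := by
        rw [skewIndec_iff]
        intro c hc
        obtain ⟨hc0, hca, hcA, hcB⟩ := hc
        refine hmin c hca ⟨hc0, by omega, ?_, ?_⟩
        · intro p hp
          have hpa : (p:ℕ) < a := by omega
          have hpe : p = bpos 0 a h0a ⟨(p:ℕ), hpa⟩ := Fin.ext (by simp [bpos])
          have e := hα0 ⟨(p:ℕ), hpa⟩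
          have hval := hcA ⟨(p:ℕ), hpa⟩ hp
          rw [hpe]
          omega
        · intro p hp
          rcases lt_or_ge (p:ℕ) a with hpa | hpa
          · have hpe : p = bpos 0 a h0a ⟨(p:ℕ), hpa⟩ := Fin.ext (by simp [bpos])
            have e := hα0 ⟨(p:ℕ), hpa⟩
            have hval := hcB ⟨(p:ℕ), hpa⟩ hp
            rw [hpe]
            omega
          · have := hB p hpa
            omega
      rcases eq_or_lt_of_le hab with heq | hlt
      · -- a = b : the 21 form
        left
        refine ⟨![a, a], pairP α0 α0⁻¹, ?_, by simpa using hindec0,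
          by simpa using hindec0.inv, rfl, HEq.rfl⟩
        rw [isInflation21_iff]
        simp only [Matrix.cons_val_zero, Matrix.cons_val_one, Matrix.head_cons,
          pairP_zero, pairP_one]
        refine ⟨ha0, ha0, by omega, ?_, ?_⟩
        · intro j p hp
          have hpe : p = bpos 0 a h0a j := Fin.ext (by simp [bpos, hp])
          rw [hpe]
          have := hα0 j
          omega
        · intro j p hp
          have hpe : p = bpos b a hba j := Fin.ext (by simp [bpos, hp]; omega)
          rw [hpe]
          exact hα0inv j
      · -- a < b : the 321 form
        right
        have hmb : a + (b - a) ≤ N := by omega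
        have hvmid : ∀ j : Fin (b - a), a ≤ (π (bpos a (b - a) hmb j) : ℕ) ∧
            (π (bpos a (b - a) hmb j) : ℕ) < a + (b - a) := by
          intro j
          have hj := j.isLt
          have h1 := F4 (bpos a (b - a) hmb j) (by simp [bpos]; omega)
          have h2 := hB (bpos a (b - a) hmb j) (by simp [bpos])
          omega
        set α1 := blockPerm π a a (b - a) hmb hvmid with hα1def
        have hα1 : ∀ j : Fin (b - a), (π (bpos a (b - a) hmb j) : ℕ) = a + (α1 j : ℕ) :=
          fun j => (blockPerm_val π a a (b - a) hmb hvmid j).symm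
        have hα1inv : α1⁻¹ = α1 := by
          rw [inv_eq_self_iff']
          intro j
          have e1 := hα1 j
          have e2 := hα1 (α1 j)
          have hpe : bpos a (b - a) hmb (α1 j) = π (bpos a (b - a) hmb j) :=
            Fin.ext (by rw [e1]; simp [bpos])
          rw [hpe, hπ2] at e2
          simp only [bpos] at e2
          exact Fin.ext (by (try simp only [Fin.val_mk]); omega)
        refine ⟨![a, b - a, a], tripP α0 α1 α0⁻¹, ?_, by simpa using hindec0,
          by simpa using hindec0.inv, rfl, HEq.rfl, by exact hα1inv⟩
        rw [isInflation321_iff]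
        simp only [Matrix.cons_val_zero, Matrix.cons_val_one, Matrix.head_cons,
          Matrix.cons_val_two, Matrix.tail_cons, tripP_zero, tripP_one, tripP_two]
        refine ⟨ha0, by omega, ha0, by omega, ?_, ?_, ?_⟩
        · intro j p hp
          have hpe : p = bpos 0 a h0a j := Fin.ext (by simp [bpos, hp])
          rw [hpe]
          have := hα0 j
          omega
        · intro j p hp
          have hpe : p = bpos a (b - a) hmb j := Fin.ext (by simp [bpos, hp])
          rw [hpe]
          exact hα1 j
        · intro j p hp
          have hpe : p = bpos b a hba j := Fin.ext (by simp [bpos, hp]; omega)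
          rw [hpe]
          exact hα0inv j
  · rintro (⟨k, α, hi, h0, h1⟩ | ⟨k, α, hi, hi0, hi1, hk, hheq⟩ |
      ⟨k, α, hi, hi0, hi2, hk, hheq, hmid⟩)
    · -- form (i)
      rw [isInflation12_iff] at hi
      obtain ⟨hk0, hk1, hN, hA, hB⟩ := hi
      have h0inv : ∀ x, α 0 (α 0 x) = x := (inv_eq_self_iff' _).mp h0
      have h1inv : ∀ x, α 1 (α 1 x) = x := (inv_eq_self_iff' _).mp h1
      rw [inv_eq_self_iff']
      intro p
      refine Fin.ext ?_
      rcases lt_or_ge (p:ℕ) (k 0) with hp | hp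
      · have e1 := hA ⟨(p:ℕ), hp⟩ p rfl
        have hlt : (π p : ℕ) < k 0 := by rw [e1]; exact (α 0 _).isLt
        have e2 := hA ⟨(π p : ℕ), hlt⟩ (π p) rfl
        have he : (⟨(π p : ℕ), hlt⟩ : Fin (k 0)) = α 0 ⟨(p:ℕ), hp⟩ := Fin.ext e1
        rw [he, h0inv] at e2
        exact e2
      · have hj : (p:ℕ) - k 0 < k 1 := by have := p.isLt; omega
        have e1 := hB ⟨(p:ℕ) - k 0, hj⟩ p (by (try simp only [Fin.val_mk]); omega)
        have hge : k 0 ≤ (π p : ℕ) := by omega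
        have hj2 : (π p : ℕ) - k 0 < k 1 := by
          have := (α 1 ⟨(p:ℕ) - k 0, hj⟩).isLt
          omega
        have e2 := hB ⟨(π p : ℕ) - k 0, hj2⟩ (π p) (by (try simp only [Fin.val_mk]); omega)
        have he : (⟨(π p : ℕ) - k 0, hj2⟩ : Fin (k 1)) = α 1 ⟨(p:ℕ) - k 0, hj⟩ :=
          Fin.ext (by (try simp only [Fin.val_mk]); omega)
        rw [he, h1inv] at e2
        simp only [Fin.val_mk] at e2
        omega
    · -- form (ii)
      rw [isInflation21_iff] at hi
      obtain ⟨hk0, hk1, hN, hA, hB⟩ := hi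
      have hval := perm_heq_apply hk hheq
      rw [inv_eq_self_iff']
      intro p
      refine Fin.ext ?_
      rcases lt_or_ge (p:ℕ) (k 0) with hp | hp
      · have e1 := hA ⟨(p:ℕ), hp⟩ p rfl
        have hb0 := (α 0 ⟨(p:ℕ), hp⟩).isLt
        have hj2 : (π p : ℕ) - k 0 < k 1 := by omega
        have e2 := hB ⟨(π p : ℕ) - k 0, hj2⟩ (π p) (by (try simp only [Fin.val_mk]); omega)
        have hj2' : (π p : ℕ) - k 0 < k 0 := by omega
        have hv := hval ((π p : ℕ) - k 0) hj2 hj2'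
        have he : (⟨(π p : ℕ) - k 0, hj2'⟩ : Fin (k 0)) = α 0 ⟨(p:ℕ), hp⟩ :=
          Fin.ext (by (try simp only [Fin.val_mk]); omega)
        rw [he] at hv
        rw [Equiv.Perm.inv_apply_self] at hv
        simp only [Fin.val_mk] at hv
        omega
      · have hj : (p:ℕ) - k 0 < k 1 := by have := p.isLt; omega
        have e1 := hB ⟨(p:ℕ) - k 0, hj⟩ p (by (try simp only [Fin.val_mk]); omega)
        have hj' : (p:ℕ) - k 0 < k 0 := by omega
        have hv := hval ((p:ℕ) - k 0) hj hj'
        have hlt : (π p : ℕ) < k 0 := by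
          have := ((α 0)⁻¹ ⟨(p:ℕ) - k 0, hj'⟩).isLt
          omega
        have e2 := hA ⟨(π p : ℕ), hlt⟩ (π p) rfl
        have he : (⟨(π p : ℕ), hlt⟩ : Fin (k 0)) = (α 0)⁻¹ ⟨(p:ℕ) - k 0, hj'⟩ :=
          Fin.ext (by (try simp only [Fin.val_mk]); omega)
        rw [he, Equiv.Perm.apply_inv_self] at e2
        simp only [Fin.val_mk] at e2
        omega
    · -- form (iii)
      rw [isInflation321_iff] at hi
      obtain ⟨hk0, hk1, hk2, hN, hA, hBm, hC⟩ := hi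
      have hval := perm_heq_apply hk hheq
      have hmidinv : ∀ x, α 1 (α 1 x) = x := (inv_eq_self_iff' _).mp hmid
      rw [inv_eq_self_iff']
      intro p
      refine Fin.ext ?_
      rcases lt_or_ge (p:ℕ) (k 0) with hp | hp
      · have e1 := hA ⟨(p:ℕ), hp⟩ p rfl
        have hb0 := (α 0 ⟨(p:ℕ), hp⟩).isLt
        have hj2 : (π p : ℕ) - (k 0 + k 1) < k 2 := by omega
        have e2 := hC ⟨(π p : ℕ) - (k 0 + k 1), hj2⟩ (π p) (by (try simp only [Fin.val_mk]); omega)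
        have hj2' : (π p : ℕ) - (k 0 + k 1) < k 0 := by omega
        have hv := hval ((π p : ℕ) - (k 0 + k 1)) hj2 hj2'
        have he : (⟨(π p : ℕ) - (k 0 + k 1), hj2'⟩ : Fin (k 0)) = α 0 ⟨(p:ℕ), hp⟩ :=
          Fin.ext (by (try simp only [Fin.val_mk]); omega)
        rw [he, Equiv.Perm.inv_apply_self] at hv
        simp only [Fin.val_mk] at hv
        omega
      rcases lt_or_ge (p:ℕ) (k 0 + k 1) with hp2 | hp2
      · have hj : (p:ℕ) - k 0 < k 1 := by omega
        have e1 := hBm ⟨(p:ℕ) - k 0, hj⟩ p (by (try simp only [Fin.val_mk]); omega)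
        have hb1 := (α 1 ⟨(p:ℕ) - k 0, hj⟩).isLt
        have hge : k 0 ≤ (π p : ℕ) := by omega
        have hj2 : (π p : ℕ) - k 0 < k 1 := by omega
        have e2 := hBm ⟨(π p : ℕ) - k 0, hj2⟩ (π p) (by (try simp only [Fin.val_mk]); omega)
        have he : (⟨(π p : ℕ) - k 0, hj2⟩ : Fin (k 1)) = α 1 ⟨(p:ℕ) - k 0, hj⟩ :=
          Fin.ext (by (try simp only [Fin.val_mk]); omega)
        rw [he, hmidinv] at e2
        simp only [Fin.val_mk] at e2
        omega
      · have hj : (p:ℕ) - (k 0 + k 1) < k 2 := by have := p.isLt; omega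
        have e1 := hC ⟨(p:ℕ) - (k 0 + k 1), hj⟩ p (by (try simp only [Fin.val_mk]); omega)
        have hj' : (p:ℕ) - (k 0 + k 1) < k 0 := by omega
        have hv := hval ((p:ℕ) - (k 0 + k 1)) hj hj'
        have hlt : (π p : ℕ) < k 0 := by
          have := ((α 0)⁻¹ ⟨(p:ℕ) - (k 0 + k 1), hj'⟩).isLt
          omega
        have e2 := hA ⟨(π p : ℕ), hlt⟩ (π p) rfl
        have he : (⟨(π p : ℕ), hlt⟩ : Fin (k 0)) = (α 0)⁻¹ ⟨(p:ℕ) - (k 0 + k 1), hj'⟩ :=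
          Fin.ext (by (try simp only [Fin.val_mk]); omega)
        rw [he, Equiv.Perm.apply_inv_self] at e2
        simp only [Fin.val_mk] at e2
        omega
end
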